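/- arXiv:1808.01665 — 9 statements merged into one kernel-verified Lean document; each statement's English description precedes it below -/
import Mathlib

section
/- For a function g in the control class, the asymptotic variance of f + L g satisfies σ²_∞(f + L g) = 2π(f̂ (f - π(f))) - 4π(g (f - π(f))) + 2π(‖∇g‖²), where f̂ is the Poisson solution for f. Consequently minimizing g ↦ σ²_∞(f + L g) is equivalent to minimizing g ↦ -4π(g(f - π(f))) + 2π(‖∇g‖²), which does not involve f̂. -/
open MeasureTheory Real
open scoped BigOperators RealInnerProductSpace

noncomputable section

abbrev Euc (d : ℕ) := EuclideanSpace ℝ (Fin d)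

/-- Laplacian via the second iterated Fréchet derivative in coordinate directions. -/
def lapl {d : ℕ} (φ : Euc d → ℝ) (x : Euc d) : ℝ :=
  ∑ i : Fin d, iteratedFDeriv ℝ 2 φ x ![EuclideanSpace.single i 1, EuclideanSpace.single i 1]

/-- The Langevin generator `L φ = -⟨∇U, ∇φ⟩ + Δφ`. -/
def gen {d : ℕ} (U φ : Euc d → ℝ) (x : Euc d) : ℝ :=
  - ⟪gradient U x, gradient φ x⟫ + lapl φ x

/-- The Gibbs probability measure `π(dx) ∝ e^{-U(x)} dx`. -/
def gibbs {d : ℕ} (U : Euc d → ℝ) : Measure (Euc d) :=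
  ((∫⁻ x, ENNReal.ofReal (Real.exp (-U x)))⁻¹) •
    ((volume : Measure (Euc d)).withDensity fun x => ENNReal.ofReal (Real.exp (-U x)))

/-- Polynomial growth of the `k`-th derivative. -/
def PolyGrowthD {d : ℕ} (k : ℕ) (f : Euc d → ℝ) : Prop :=
  ∃ (C : ℝ) (p : ℕ), ∀ x, ‖iteratedFDeriv ℝ k f x‖ ≤ C * (1 + ‖x‖) ^ p

/-
Since `f̂ - g` solves the Poisson equation for `f + L g`, and `π(L g) = 0`, the asymptotic variance
is `2 π((f̂ - g)(f - π f + L g))`. Expanding the product, the cross term `π(f̂ L g)` equals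
`π(g L f̂) = -π(g (f - π f))` by symmetry of `L` and the Poisson equation, while `π(g L g) = -π(‖∇g‖²)`
by the carré du champ identity.
-/

lemma integral_sub_mul_add_eq {α : Type*} [MeasurableSpace α] {μ : Measure α}
    {φ ψ u v : α → ℝ}
    (hφu : Integrable (fun x => φ x * u x) μ) (hφv : Integrable (fun x => φ x * v x) μ)
    (hψu : Integrable (fun x => ψ x * u x) μ) (hψv : Integrable (fun x => ψ x * v x) μ) :
    ∫ x, (φ x - ψ x) * (u x + v x) ∂μ
      = ∫ x, φ x * u x ∂μ + ∫ x, φ x * v x ∂μ - ∫ x, ψ x * u x ∂μ - ∫ x, ψ x * v x ∂μ := by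
  have hexpand : (fun x => (φ x - ψ x) * (u x + v x))
      = fun x => (φ x * u x + φ x * v x) - (ψ x * u x + ψ x * v x) := by
    funext x; ring
  have hsub := integral_sub (hφu.add hφv) (hψu.add hψv)
  simp only [Pi.add_apply] at hsub
  rw [hexpand, hsub, integral_add hφu hφv, integral_add hψu hψv]
  ring

theorem stmt_3_general {d : ℕ} (U f g fhat : Euc d → ℝ)
    (c : ℝ) (hc : c = ∫ y, f y ∂(gibbs U))
    (hPoisson : ∀ x, gen U fhat x = c - f x)
    (hLg0 : ∫ x, gen U g x ∂(gibbs U) = 0)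
    (hsym : ∫ x, fhat x * gen U g x ∂(gibbs U) = ∫ x, g x * gen U fhat x ∂(gibbs U))
    (hgg : ∫ x, g x * gen U g x ∂(gibbs U) = - ∫ x, ‖gradient g x‖ ^ 2 ∂(gibbs U))
    (hintf : Integrable f (gibbs U))
    (hint1 : Integrable (fun x => fhat x * (f x - c)) (gibbs U))
    (hint2 : Integrable (fun x => g x * (f x - c)) (gibbs U))
    (hint3 : Integrable (fun x => fhat x * gen U g x) (gibbs U))
    (hint4 : Integrable (fun x => g x * gen U g x) (gibbs U))
    (hint6 : Integrable (fun x => gen U g x) (gibbs U)) :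
    2 * ∫ x, (fhat x - g x) * ((f x + gen U g x) - ∫ y, (f y + gen U g y) ∂(gibbs U)) ∂(gibbs U)
      = 2 * ∫ x, fhat x * (f x - c) ∂(gibbs U)
        - 4 * ∫ x, g x * (f x - c) ∂(gibbs U)
        + 2 * ∫ x, ‖gradient g x‖ ^ 2 ∂(gibbs U) := by
  have hmean : ∫ y, (f y + gen U g y) ∂(gibbs U) = c := by
    rw [integral_add hintf hint6, hLg0, hc, add_zero]
  have hcross : ∫ x, g x * gen U fhat x ∂(gibbs U) = - ∫ x, g x * (f x - c) ∂(gibbs U) := by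
    rw [← integral_neg]
    simp_rw [hPoisson]
    congr 1; funext x; ring
  calc 2 * ∫ x, (fhat x - g x) * ((f x + gen U g x) - ∫ y, (f y + gen U g y) ∂(gibbs U)) ∂(gibbs U)
      = 2 * ∫ x, (fhat x - g x) * ((f x - c) + gen U g x) ∂(gibbs U) := by
        simp_rw [hmean, add_sub_right_comm]
    _ = _ := by
        rw [integral_sub_mul_add_eq hint1 hint3 hint2 hint4, hsym, hcross, hgg]
        ring

theorem stmt_3 {d : ℕ} (U f g fhat : Euc d → ℝ)
    (hU : ContDiff ℝ (⊤ : ℕ∞) U) (hexp : Integrable fun x => Real.exp (-U x))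
    (hf : ContDiff ℝ 2 f) (hg : ContDiff ℝ 2 g) (hfhat : ContDiff ℝ 2 fhat)
    (hfpg : ∀ k ≤ 2, PolyGrowthD k f) (hgpg : ∀ k ≤ 2, PolyGrowthD k g)
    (hfhatpg : ∀ k ≤ 2, PolyGrowthD k fhat)
    (c : ℝ) (hc : c = ∫ y, f y ∂(gibbs U))
    (hPoisson : ∀ x, gen U fhat x = c - f x)
    (hLg0 : ∫ x, gen U g x ∂(gibbs U) = 0)
    (hsym : ∫ x, fhat x * gen U g x ∂(gibbs U) = ∫ x, g x * gen U fhat x ∂(gibbs U))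
    (hgg : ∫ x, g x * gen U g x ∂(gibbs U) = - ∫ x, ‖gradient g x‖ ^ 2 ∂(gibbs U))
    (hintf : Integrable f (gibbs U))
    (hint1 : Integrable (fun x => fhat x * (f x - c)) (gibbs U))
    (hint2 : Integrable (fun x => g x * (f x - c)) (gibbs U))
    (hint3 : Integrable (fun x => fhat x * gen U g x) (gibbs U))
    (hint4 : Integrable (fun x => g x * gen U g x) (gibbs U))
    (hint5 : Integrable (fun x => ‖gradient g x‖ ^ 2) (gibbs U))
    (hint6 : Integrable (fun x => gen U g x) (gibbs U)) :
    2 * ∫ x, (fhat x - g x) * ((f x + gen U g x) - ∫ y, (f y + gen U g y) ∂(gibbs U)) ∂(gibbs U)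
      = 2 * ∫ x, fhat x * (f x - c) ∂(gibbs U)
        - 4 * ∫ x, g x * (f x - c) ∂(gibbs U)
        + 2 * ∫ x, ‖gradient g x‖ ^ 2 ∂(gibbs U) :=
  stmt_3_general U f g fhat c hc hPoisson hLg0 hsym hgg hintf hint1 hint2 hint3 hint4 hint6
end
end

section
/- For a linear control family g_θ = ⟨θ, ψ⟩ with ψ = (ψ₁,…,ψ_p) and the matrix H with entries H_{ij} = π(⟨∇ψ_i, ∇ψ_j⟩): if (1, ψ₁,…,ψ_p) are linearly independent in C²_poly, then H is symmetric positive definite, and the map θ ↦ σ²_∞(f + L g_θ) = 2 θᵀ H θ - 4⟨θ, b⟩ + σ²_∞(f), with b_i = π(ψ_i (f - π(f))), attains its unique minimum at θ* = H⁻¹ b. -/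
/-!
The quadratic form of `H` is `θ ↦ π(‖∇⟨θ, ψ⟩‖²)`, so `H` is positive semidefinite, and a null
vector `θ` gives a function `⟨θ, ψ⟩` whose continuous gradient vanishes `π`-a.e. Since the Gibbs
measure has a positive density, it charges every open set, so the gradient vanishes everywhere and
`⟨θ, ψ⟩` is constant, forcing `θ = 0`. The minimisation is then completing the square for a positive
definite quadratic form.
-/

open MeasureTheory Real
open scoped BigOperators RealInnerProductSpace

noncomputable section

open Matrix
open scoped Gradient

section Quadratic

variable {n : Type*} [Fintype n]

lemma Matrix.IsHermitian.dotProduct_mulVec_comm {H : Matrix n n ℝ} (hH : H.IsHermitian)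
    (x y : n → ℝ) : x ⬝ᵥ (H *ᵥ y) = y ⬝ᵥ (H *ᵥ x) := by
  rw [dotProduct_mulVec, ← mulVec_transpose, ← conjTranspose_eq_transpose_of_trivial, hH,
    dotProduct_comm]

lemma Matrix.PosDef.quadratic_lt_of_ne_inv_mulVec [DecidableEq n] {H : Matrix n n ℝ}
    (hH : H.PosDef) (b : n → ℝ) {θ : n → ℝ} (hθ : θ ≠ H⁻¹ *ᵥ b) :
    (H⁻¹ *ᵥ b) ⬝ᵥ (H *ᵥ (H⁻¹ *ᵥ b)) - 2 * ((H⁻¹ *ᵥ b) ⬝ᵥ b)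
      < θ ⬝ᵥ (H *ᵥ θ) - 2 * (θ ⬝ᵥ b) := by
  set t := H⁻¹ *ᵥ b
  have hHt : H *ᵥ t = b := by
    rw [mulVec_mulVec, mul_nonsing_inv _ ((isUnit_iff_isUnit_det H).mp hH.isUnit), one_mulVec]
  have hpos : 0 < (θ - t) ⬝ᵥ (H *ᵥ (θ - t)) := by
    simpa using hH.dotProduct_mulVec_pos (sub_ne_zero.mpr hθ)
  have hcomm := hH.isHermitian.dotProduct_mulVec_comm θ t
  -- completing the square: the difference of the two sides is `(θ - t)ᵀ H (θ - t)`
  rw [hHt] at hcomm ⊢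
  simp only [mulVec_sub, sub_dotProduct, dotProduct_sub, hHt] at hpos
  linarith

end Quadratic

section Gram

variable {α E ι : Type*} [MeasurableSpace α] {μ : Measure α}
  [NormedAddCommGroup E] [InnerProductSpace ℝ E] [Fintype ι]

lemma norm_sum_smul_sq_eq_sum_inner (G : ι → E) (θ : ι → ℝ) :
    ‖∑ i, θ i • G i‖ ^ 2 = ∑ i, ∑ j, θ i * θ j * ⟪G i, G j⟫ := by
  rw [← real_inner_self_eq_norm_sq, sum_inner]
  simp only [inner_sum, real_inner_smul_left, real_inner_smul_right]
  exact Finset.sum_congr rfl fun i _ => Finset.sum_congr rfl fun j _ => by ring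

lemma dotProduct_mulVec_eq_integral_norm_sq {G : ι → α → E} {H : Matrix ι ι ℝ}
    (hH : ∀ i j, H i j = ∫ x, ⟪G i x, G j x⟫ ∂μ)
    (hint : ∀ i j, Integrable (fun x => ⟪G i x, G j x⟫) μ) (θ : ι → ℝ) :
    θ ⬝ᵥ (H *ᵥ θ) = ∫ x, ‖∑ i, θ i • G i x‖ ^ 2 ∂μ := by
  simp only [norm_sum_smul_sq_eq_sum_inner]
  rw [integral_finsetSum _ fun i _ => integrable_finsetSum _ fun j _ => (hint i j).const_mul _]
  simp only [dotProduct, mulVec, Finset.mul_sum, hH]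
  refine Finset.sum_congr rfl fun i _ => ?_
  rw [integral_finsetSum _ fun j _ => (hint i j).const_mul _]
  refine Finset.sum_congr rfl fun j _ => ?_
  rw [integral_const_mul]
  ring

lemma Matrix.posDef_of_eq_integral_inner {G : ι → α → E} {H : Matrix ι ι ℝ}
    (hH : ∀ i j, H i j = ∫ x, ⟪G i x, G j x⟫ ∂μ)
    (hint : ∀ i j, Integrable (fun x => ⟪G i x, G j x⟫) μ)
    (hindep : ∀ θ : ι → ℝ, (∀ᵐ x ∂μ, ∑ i, θ i • G i x = 0) → θ = 0) :
    H.PosDef := by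
  have hquad := dotProduct_mulVec_eq_integral_norm_sq hH hint
  have hherm : H.IsHermitian := by
    ext i j
    simp only [conjTranspose_apply, star_trivial, hH, real_inner_comm]
  refine PosDef.of_dotProduct_mulVec_pos hherm fun θ hθ => ?_
  rw [star_trivial, hquad]
  refine (integral_nonneg fun x => sq_nonneg _).lt_of_ne fun h => hθ (hindep θ ?_)
  have hsq_int : Integrable (fun x => ‖∑ i, θ i • G i x‖ ^ 2) μ := by
    simp only [norm_sum_smul_sq_eq_sum_inner]
    exact integrable_finsetSum _ fun i _ => integrable_finsetSum _ fun j _ =>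
      (hint i j).const_mul _
  filter_upwards [(integral_eq_zero_iff_of_nonneg (fun x => sq_nonneg _) hsq_int).mp h.symm]
    with x hx
  simpa using hx

end Gram

section Gradient

variable {F : Type*} [NormedAddCommGroup F] [InnerProductSpace ℝ F] [CompleteSpace F]

lemma hasGradientAt_sum_const_mul {ι : Type*} [Fintype ι] {ψ : ι → F → ℝ} {x : F}
    (hψ : ∀ i, DifferentiableAt ℝ (ψ i) x) (θ : ι → ℝ) :
    HasGradientAt (fun y => ∑ i, θ i * ψ i y) (∑ i, θ i • ∇ (ψ i) x) x := by
  rw [hasGradientAt_iff_hasFDerivAt, map_sum]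
  refine HasFDerivAt.fun_sum fun i _ => ?_
  rw [map_smul, toDual_gradient]
  exact (hψ i).hasFDerivAt.const_mul (θ i)

lemma eq_of_ae_gradient_eq_zero [MeasurableSpace F] [BorelSpace F] {μ : Measure F}
    [μ.IsOpenPosMeasure] {g : F → ℝ} (hg : ContDiff ℝ 1 g) (h : ∀ᵐ x ∂μ, ∇ g x = 0)
    (x y : F) : g x = g y := by
  have hcont : Continuous (∇ g) :=
    (InnerProductSpace.toDual ℝ F).symm.continuous.comp (hg.continuous_fderiv one_ne_zero)
  have hzero : ∇ g = 0 := (hcont.ae_eq_iff_eq μ continuous_const).mp h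
  refine is_const_of_fderiv_eq_zero (hg.differentiable one_ne_zero) (fun z => ?_) x y
  rw [← toDual_gradient, hzero, Pi.zero_apply, map_zero]

end Gradient

lemma isOpenPosMeasure_gibbs {d : ℕ} {U : Euc d → ℝ} (hU : Measurable U)
    (hexp : Integrable fun x => Real.exp (-U x)) : (gibbs U).IsOpenPosMeasure := by
  have : (volume.withDensity fun x => ENNReal.ofReal (Real.exp (-U x))).IsOpenPosMeasure :=
    (withDensity_absolutelyContinuous' hU.neg.exp.ennreal_ofReal.aemeasurable
      (.of_forall fun x => (ENNReal.ofReal_pos.mpr (Real.exp_pos _)).ne')).isOpenPosMeasure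
  exact Measure.isOpenPosMeasure_smul _ (ENNReal.inv_ne_zero.mpr hexp.lintegral_lt_top.ne)

theorem stmt_4_general {d p : ℕ} (U : Euc d → ℝ) (ψ : Fin p → Euc d → ℝ)
    (hU : ContDiff ℝ (⊤ : ℕ∞) U)
    (hexp : Integrable fun x => Real.exp (-U x))
    (hψ : ∀ i, ContDiff ℝ 2 (ψ i))
    (H : Matrix (Fin p) (Fin p) ℝ)
    (hH : ∀ i j, H i j = ∫ x, ⟪gradient (ψ i) x, gradient (ψ j) x⟫ ∂(gibbs U))
    (hHint : ∀ i j, Integrable (fun x => ⟪gradient (ψ i) x, gradient (ψ j) x⟫) (gibbs U))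
    (b : Fin p → ℝ)
    (hli : ∀ (c : Fin p → ℝ) (a : ℝ),
      (∀ᵐ x ∂(gibbs U), ∑ i, c i * ψ i x = a) → c = 0)
    (S : (Fin p → ℝ) → ℝ) (S0 : ℝ)
    (hS : ∀ θ, S θ = 2 * (θ ⬝ᵥ (H *ᵥ θ)) - 4 * (θ ⬝ᵥ b) + S0) :
    H.PosDef ∧ ∀ θ, θ ≠ H⁻¹ *ᵥ b → S (H⁻¹ *ᵥ b) < S θ := by
  have := isOpenPosMeasure_gibbs hU.continuous.measurable hexp
  have hPD : H.PosDef := by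
    refine Matrix.posDef_of_eq_integral_inner hH hHint fun θ hθ => hli θ (∑ i, θ i * ψ i 0) ?_
    have hgrad : ∀ x, ∇ (fun y => ∑ i, θ i * ψ i y) x = ∑ i, θ i • ∇ (ψ i) x := fun x =>
      (hasGradientAt_sum_const_mul (fun i => ((hψ i).differentiable two_ne_zero).differentiableAt)
        θ).gradient
    have hsmooth : ContDiff ℝ 1 fun y => ∑ i, θ i * ψ i y :=
      ContDiff.sum fun i _ => contDiff_const.mul ((hψ i).of_le one_le_two)
    have hflat : ∀ᵐ x ∂(gibbs U), ∇ (fun y => ∑ i, θ i * ψ i y) x = 0 := by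
      simpa only [hgrad] using hθ
    exact .of_forall fun x => eq_of_ae_gradient_eq_zero hsmooth hflat x 0
  refine ⟨hPD, fun θ hθ => ?_⟩
  have := hPD.quadratic_lt_of_ne_inv_mulVec b hθ
  rw [hS, hS]
  linarith

theorem stmt_4 {d p : ℕ} (U : Euc d → ℝ) (ψ : Fin p → Euc d → ℝ) (f : Euc d → ℝ)
    (hU : ContDiff ℝ (⊤ : ℕ∞) U)
    (hexp : Integrable fun x => Real.exp (-U x))
    (hψ : ∀ i, ContDiff ℝ 2 (ψ i)) (hψpg : ∀ i, ∀ k ≤ 2, PolyGrowthD k (ψ i))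
    (H : Matrix (Fin p) (Fin p) ℝ)
    (hH : ∀ i j, H i j = ∫ x, ⟪gradient (ψ i) x, gradient (ψ j) x⟫ ∂(gibbs U))
    (hHint : ∀ i j, Integrable (fun x => ⟪gradient (ψ i) x, gradient (ψ j) x⟫) (gibbs U))
    (b : Fin p → ℝ)
    (hb : ∀ i, b i = ∫ x, ψ i x * (f x - ∫ y, f y ∂(gibbs U)) ∂(gibbs U))
    (hli : ∀ (c : Fin p → ℝ) (a : ℝ),
      (∀ᵐ x ∂(gibbs U), ∑ i, c i * ψ i x = a) → c = 0)
    (S : (Fin p → ℝ) → ℝ) (S0 : ℝ)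
    (hS : ∀ θ, S θ = 2 * (θ ⬝ᵥ (H *ᵥ θ)) - 4 * (θ ⬝ᵥ b) + S0) :
    H.PosDef ∧ ∀ θ, θ ≠ H⁻¹ *ᵥ b → S (H⁻¹ *ᵥ b) < S θ :=
  stmt_4_general U ψ hU hexp hψ H hH hHint b hli S S0 hS
end
end

section
/- Suppose ∇U is L-Lipschitz, ‖D³U‖ ≤ M everywhere, and D²U(x) ≥ m·Id for ‖x‖ ≥ K₁ with m > 0. Then there exists K₂ ≥ 0 such that for all x with ‖x‖ ≥ K₂: ⟨∇U(x), x⟩ ≥ (m/2)‖x‖², and in particular ‖∇U(x)‖ ≥ (m/2)‖x‖. (One may take K₂ = K₁(1 + L/m) · 2, assuming ∇U(0) = 0.) -/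
open MeasureTheory Real
open scoped BigOperators RealInnerProductSpace

noncomputable section

theorem stmt_5 {d : ℕ} (U : Euc d → ℝ) (L m M K₁ : ℝ)
    (hU : ContDiff ℝ 3 U) (h0 : gradient U 0 = 0)
    (hLip : ∀ x y, ‖gradient U x - gradient U y‖ ≤ L * ‖x - y‖)
    (hm : 0 < m) (hK₁ : 0 ≤ K₁)
    (hHess : ∀ x, K₁ ≤ ‖x‖ → ∀ y : Euc d, m * ‖y‖ ^ 2 ≤ iteratedFDeriv ℝ 2 U x ![y, y])
    (hM : ∀ x, ‖iteratedFDeriv ℝ 3 U x‖ ≤ M) :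
    ∃ K₂ : ℝ, 0 ≤ K₂ ∧ ∀ x : Euc d, K₂ ≤ ‖x‖ →
      (m / 2) * ‖x‖ ^ 2 ≤ ⟪gradient U x, x⟫ ∧ (m / 2) * ‖x‖ ≤ ‖gradient U x‖ := by
  have hf' : ContDiff ℝ 2 (fderiv ℝ U) := hU.fderiv_right (by norm_num)
  have hdf' : Differentiable ℝ (fderiv ℝ U) := hf'.differentiable (by norm_num)
  have hgrad : ∀ (x y : Euc d), ⟪gradient U x, y⟫ = fderiv ℝ U x y := fun x y => by
    rw [gradient]; exact InnerProductSpace.toDual_symm_apply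
  refine ⟨2 * K₁ * ((m + |L|) / m), by positivity, fun x hx => ?_⟩
  rcases eq_or_lt_of_le (norm_nonneg x) with hx0 | hx0
  · have hx0 : x = 0 := by simpa using hx0.symm
    subst hx0
    simp [h0]
  -- x ≠ 0 case
  set t₀ : ℝ := K₁ / ‖x‖ with ht₀
  have ht₀0 : 0 ≤ t₀ := div_nonneg hK₁ (norm_nonneg x)
  have hxK : 2 * K₁ * ((m + |L|) / m) ≤ ‖x‖ := hx
  have hK1x : 2 * K₁ ≤ ‖x‖ := by
    have h1 : (1:ℝ) ≤ (m + |L|) / m := by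
      rw [le_div_iff₀ hm]; nlinarith [abs_nonneg L]
    nlinarith
  have ht₀1 : t₀ ≤ 1 := by
    rw [ht₀, div_le_one hx0]; linarith
  have ht₀x : t₀ * ‖x‖ = K₁ := by
    rw [ht₀, div_mul_cancel₀ _ (ne_of_gt hx0)]
  -- the function g
  set g : ℝ → ℝ := fun t => fderiv ℝ U (t • x) x with hg
  have hder : ∀ t : ℝ, HasDerivAt g (iteratedFDeriv ℝ 2 U (t • x) ![x, x]) t := by
    intro t
    have h1 : HasDerivAt (fun s : ℝ => s • x) x t := by
      simpa using (hasDerivAt_id t).smul_const x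
    have h2 : HasFDerivAt (fderiv ℝ U) (fderiv ℝ (fderiv ℝ U) (t • x)) (t • x) :=
      (hdf' (t • x)).hasFDerivAt
    have h3 : HasDerivAt (fun s : ℝ => fderiv ℝ U (s • x))
        (fderiv ℝ (fderiv ℝ U) (t • x) x) t := h2.comp_hasDerivAt t h1
    have h4 := h3.clm_apply (hasDerivAt_const t x)
    rw [iteratedFDeriv_two_apply]
    simpa using h4
  have hderiv : ∀ t : ℝ, deriv g t = iteratedFDeriv ℝ 2 U (t • x) ![x, x] :=
    fun t => (hder t).deriv
  have hgdiff : Differentiable ℝ g := fun t => (hder t).differentiableAt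
  -- lower bound on deriv on [t₀, 1]
  have key : m * ‖x‖ ^ 2 * (1 - t₀) ≤ g 1 - g t₀ := by
    refine (Convex.mul_sub_le_image_sub_of_le_deriv (convex_Icc t₀ 1)
      hgdiff.continuous.continuousOn (hgdiff.differentiableOn) ?_
      t₀ (by constructor <;> linarith) 1 (by constructor <;> linarith) ht₀1)
    intro t ht
    rw [interior_Icc] at ht
    rw [hderiv]
    refine hHess (t • x) ?_ x
    rw [norm_smul, Real.norm_eq_abs, abs_of_nonneg (le_of_lt (lt_of_le_of_lt ht₀0 ht.1))]
    calc K₁ = t₀ * ‖x‖ := ht₀x.symm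
    _ ≤ t * ‖x‖ := by nlinarith [ht.1.le]
  -- bound g t₀
  have hbound : |g t₀| ≤ L * K₁ * ‖x‖ := by
    have h1 : ‖gradient U (t₀ • x)‖ ≤ L * K₁ := by
      have h := hLip (t₀ • x) 0
      simp only [h0, sub_zero] at h
      rw [norm_smul, Real.norm_eq_abs, abs_of_nonneg ht₀0, ht₀x] at h
      exact h
    have h2 : |⟪gradient U (t₀ • x), x⟫| ≤ ‖gradient U (t₀ • x)‖ * ‖x‖ :=
      abs_real_inner_le_norm _ _
    show |(fderiv ℝ U (t₀ • x)) x| ≤ L * K₁ * ‖x‖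
    rw [← hgrad]
    calc |⟪gradient U (t₀ • x), x⟫| ≤ ‖gradient U (t₀ • x)‖ * ‖x‖ := h2
    _ ≤ L * K₁ * ‖x‖ := mul_le_mul_of_nonneg_right h1 (norm_nonneg x)
  -- conclude
  have hLK : L * K₁ ≤ |L| * K₁ := mul_le_mul_of_nonneg_right (le_abs_self L) hK₁
  have hx2 : 2 * K₁ * (m + |L|) ≤ ‖x‖ * m := by
    have heq : 2 * K₁ * ((m + |L|) / m) = 2 * K₁ * (m + |L|) / m := by ring
    rw [heq, div_le_iff₀ hm] at hxK
    exact hxK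
  have hg1 : (m / 2) * ‖x‖ ^ 2 ≤ g 1 := by
    have habs : -(L * K₁ * ‖x‖) ≤ g t₀ := neg_le_of_abs_le hbound
    have h6 : t₀ * ‖x‖ ^ 2 = K₁ * ‖x‖ := by rw [pow_two, ← mul_assoc, ht₀x]
    have h7 : m * (t₀ * ‖x‖ ^ 2) = m * (K₁ * ‖x‖) := by rw [h6]
    have p1 : 2 * K₁ * (m + |L|) * ‖x‖ ≤ ‖x‖ * m * ‖x‖ :=
      mul_le_mul_of_nonneg_right hx2 (norm_nonneg x)
    have p2 : L * K₁ * ‖x‖ ≤ |L| * K₁ * ‖x‖ :=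
      mul_le_mul_of_nonneg_right hLK (norm_nonneg x)
    nlinarith [key, habs, h7, p1, p2]
  have hinner : (m / 2) * ‖x‖ ^ 2 ≤ ⟪gradient U x, x⟫ := by
    have h := hg1
    simp only [hg, one_smul] at h
    rwa [hgrad]
  refine ⟨hinner, ?_⟩
  have hcs : ⟪gradient U x, x⟫ ≤ ‖gradient U x‖ * ‖x‖ := real_inner_le_norm _ _
  have h8 : (m / 2) * ‖x‖ * ‖x‖ ≤ ‖gradient U x‖ * ‖x‖ := by nlinarith
  exact le_of_mul_le_mul_right h8 hx0
end
end

section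
/- Let V_η(x) = exp(η‖x‖²) and let L be the Langevin generator for a potential U with ∇U L-Lipschitz and D²U ≥ m·Id outside a ball (so ⟨∇U(x),x⟩ ≥ (m/2)‖x‖² for ‖x‖ ≥ K₂). Then for any η ∈ (0, m/8], the drift inequality L V_η ≤ -2η V_η + b holds, with b = 2η exp(η(K₂² ∨ 4(d+1)/m)) [d + 1 + (2η + L)(K₂² ∨ 4(d+1)/m)]. -/
open MeasureTheory Real
open scoped BigOperators RealInnerProductSpace

noncomputable section

/-!
Since `V_η = exp (η‖x‖²)` has gradient `2η V_η x` and Laplacian `2η V_η (2η‖x‖² + d)`, the generator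
equals `2η V_η (d + 2η‖x‖² - ⟪∇U x, x⟫)`. Put `R = max (K₂²) (4(d+1)/m)`. Where `‖x‖² > R`, the drift
condition and `η ≤ m/8` make the bracket at most `-1`. Where `‖x‖² ≤ R`, the bracket plus one is at
most `d + 1 + (2η + L)R`, by `-⟪∇U x, x⟫ ≤ L‖x‖²` (Lipschitz with `∇U 0 = 0`), and `V_η ≤ exp (ηR)`.
-/

section GaussianExp

variable {E : Type*} [NormedAddCommGroup E] [InnerProductSpace ℝ E] (η : ℝ)

lemma hasFDerivAt_exp_mul_norm_sq (x : E) :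
    HasFDerivAt (fun y : E => exp (η * ‖y‖ ^ 2))
      ((2 * η * exp (η * ‖x‖ ^ 2)) • innerSL ℝ x) x := by
  convert (((hasStrictFDerivAt_norm_sq x).hasFDerivAt).const_mul η).exp using 1
  ext v
  simp only [smul_apply, innerSL_apply_apply, smul_eq_mul]
  ring

lemma fderiv_exp_mul_norm_sq :
    fderiv ℝ (fun y : E => exp (η * ‖y‖ ^ 2))
      = fun x => (2 * η * exp (η * ‖x‖ ^ 2)) • innerSL ℝ x :=
  funext fun x => (hasFDerivAt_exp_mul_norm_sq η x).fderiv

lemma gradient_exp_mul_norm_sq [CompleteSpace E] (x : E) :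
    gradient (fun y : E => exp (η * ‖y‖ ^ 2)) x = (2 * η * exp (η * ‖x‖ ^ 2)) • x := by
  refine HasGradientAt.gradient ?_
  rw [hasGradientAt_iff_hasFDerivAt]
  refine (hasFDerivAt_exp_mul_norm_sq η x).congr_fderiv ?_
  ext v
  simp

lemma iteratedFDeriv_two_exp_mul_norm_sq_apply (x v : E) :
    iteratedFDeriv ℝ 2 (fun y : E => exp (η * ‖y‖ ^ 2)) x ![v, v]
      = 2 * η * exp (η * ‖x‖ ^ 2) * (2 * η * ⟪x, v⟫ ^ 2 + ‖v‖ ^ 2) := by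
  have hfd : HasFDerivAt (fun y : E => (2 * η * exp (η * ‖y‖ ^ 2)) • innerSL ℝ y) _ x :=
    ((hasFDerivAt_exp_mul_norm_sq η x).const_mul (2 * η)).smul
      (innerSL ℝ : E →L[ℝ] E →L[ℝ] ℝ).hasFDerivAt
  rw [iteratedFDeriv_two_apply, fderiv_exp_mul_norm_sq, hfd.fderiv]
  simp only [Fin.isValue, Matrix.cons_val_zero, Matrix.cons_val_one, Matrix.cons_val_fin_one,
    add_apply, smul_apply, ContinuousLinearMap.smulRight_apply, coe_innerSL_apply, smul_eq_mul]
  rw [innerSL_apply_apply, real_inner_self_eq_norm_sq]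
  ring

end GaussianExp

lemma lapl_exp_mul_norm_sq {d : ℕ} (η : ℝ) (x : Euc d) :
    lapl (fun y : Euc d => exp (η * ‖y‖ ^ 2)) x
      = 2 * η * exp (η * ‖x‖ ^ 2) * (2 * η * ‖x‖ ^ 2 + d) := by
  simp only [lapl, iteratedFDeriv_two_exp_mul_norm_sq_apply, EuclideanSpace.inner_single_right]
  simp [EuclideanSpace.real_norm_sq_eq, Finset.mul_sum, Finset.sum_add_distrib, mul_add]
  ring

lemma gen_exp_mul_norm_sq {d : ℕ} (U : Euc d → ℝ) (η : ℝ) (x : Euc d) :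
    gen U (fun y => exp (η * ‖y‖ ^ 2)) x
      = 2 * η * exp (η * ‖x‖ ^ 2) * (d + 2 * η * ‖x‖ ^ 2 - ⟪gradient U x, x⟫) := by
  rw [gen, gradient_exp_mul_norm_sq, lapl_exp_mul_norm_sq, real_inner_smul_right]
  ring

lemma neg_inner_le_of_lipschitz {E : Type*} [NormedAddCommGroup E] [InnerProductSpace ℝ E]
    {f : E → E} {L : ℝ} (hf : ∀ x y, ‖f x - f y‖ ≤ L * ‖x - y‖) (hf0 : f 0 = 0) (x : E) :
    -⟪f x, x⟫ ≤ L * ‖x‖ ^ 2 := by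
  have hfx : ‖f x‖ ≤ L * ‖x‖ := by simpa [hf0] using hf x 0
  calc -⟪f x, x⟫ ≤ ‖f x‖ * ‖x‖ := (neg_le_abs _).trans (abs_real_inner_le_norm _ _)
    _ ≤ L * ‖x‖ * ‖x‖ := by gcongr
    _ = L * ‖x‖ ^ 2 := by ring

lemma add_two_mul_sub_inner_add_one_nonpos {E : Type*} [NormedAddCommGroup E]
    [InnerProductSpace ℝ E] {m η c : ℝ} (g x : E) (hm : 0 < m) (hη : η ≤ m / 8)
    (hg : m / 2 * ‖x‖ ^ 2 ≤ ⟪g, x⟫) (hx : 4 * (c + 1) / m ≤ ‖x‖ ^ 2) :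
    c + 2 * η * ‖x‖ ^ 2 - ⟪g, x⟫ + 1 ≤ 0 := by
  rw [div_le_iff₀ hm] at hx
  nlinarith [sq_nonneg ‖x‖]

theorem stmt_7_general {d : ℕ} (U : Euc d → ℝ) (L m K₂ η : ℝ)
    (hLip : ∀ x y, ‖gradient U x - gradient U y‖ ≤ L * ‖x - y‖)
    (h0 : gradient U 0 = 0)
    (hm : 0 < m) (hmL : m ≤ L)
    (hdrift : ∀ x : Euc d, K₂ ≤ ‖x‖ → (m/2) * ‖x‖ ^ 2 ≤ ⟪gradient U x, x⟫)
    (hη : η ∈ Set.Ioc 0 (m/8)) :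
    ∀ x : Euc d, gen U (fun y => Real.exp (η * ‖y‖ ^ 2)) x
      ≤ -(2*η) * Real.exp (η * ‖x‖ ^ 2)
        + 2*η * Real.exp (η * max (K₂ ^ 2) (4*((d:ℝ)+1)/m))
          * ((d:ℝ) + 1 + (2*η + L) * max (K₂ ^ 2) (4*((d:ℝ)+1)/m)) := by
  obtain ⟨hη0, hη8⟩ := hη
  intro x
  set R := max (K₂ ^ 2) (4 * ((d : ℝ) + 1) / m)
  set C := (d : ℝ) + 1 + (2 * η + L) * R
  have hL : 0 ≤ 2 * η + L := by linarith
  have hC : 0 ≤ C := by have : 0 ≤ R := le_max_of_le_left (sq_nonneg K₂); positivity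
  have hV : 0 ≤ 2 * η * exp (η * ‖x‖ ^ 2) := by positivity
  rw [gen_exp_mul_norm_sq]
  suffices 2 * η * exp (η * ‖x‖ ^ 2) * (d + 2 * η * ‖x‖ ^ 2 - ⟪gradient U x, x⟫ + 1)
      ≤ 2 * η * exp (η * R) * C by linarith
  rcases le_or_gt (‖x‖ ^ 2) R with hx | hx
  · have hF : (d : ℝ) + 2 * η * ‖x‖ ^ 2 - ⟪gradient U x, x⟫ + 1 ≤ C := by
      linarith [neg_inner_le_of_lipschitz hLip h0 x, mul_le_mul_of_nonneg_left hx hL]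
    have hexp : exp (η * ‖x‖ ^ 2) ≤ exp (η * R) := by gcongr
    calc _ ≤ 2 * η * exp (η * ‖x‖ ^ 2) * C := by gcongr
      _ ≤ 2 * η * exp (η * R) * C := by gcongr
  · have hK : K₂ ≤ ‖x‖ := le_of_sq_le_sq ((le_max_left _ _).trans hx.le) (norm_nonneg x)
    have hF := add_two_mul_sub_inner_add_one_nonpos _ x hm hη8 (hdrift x hK)
      ((le_max_right _ _).trans hx.le)
    calc _ ≤ (0 : ℝ) := mul_nonpos_of_nonneg_of_nonpos hV hF
      _ ≤ 2 * η * exp (η * R) * C := by positivity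

theorem stmt_7 {d : ℕ} (U : Euc d → ℝ) (L m K₂ η : ℝ)
    (hU : ContDiff ℝ 2 U)
    (hLip : ∀ x y, ‖gradient U x - gradient U y‖ ≤ L * ‖x - y‖)
    (h0 : gradient U 0 = 0)
    (hm : 0 < m) (hmL : m ≤ L) (hK₂ : 0 ≤ K₂)
    (hdrift : ∀ x : Euc d, K₂ ≤ ‖x‖ → (m/2) * ‖x‖ ^ 2 ≤ ⟪gradient U x, x⟫)
    (hη : η ∈ Set.Ioc 0 (m/8)) :
    ∀ x : Euc d, gen U (fun y => Real.exp (η * ‖y‖ ^ 2)) x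
      ≤ -(2*η) * Real.exp (η * ‖x‖ ^ 2)
        + 2*η * Real.exp (η * max (K₂ ^ 2) (4*((d:ℝ)+1)/m))
          * ((d:ℝ) + 1 + (2*η + L) * max (K₂ ^ 2) (4*((d:ℝ)+1)/m)) :=
  stmt_7_general U L m K₂ η hLip h0 hm hmL hdrift hη
end
end

section
/- Assume ∇U Lipschitz with constant L, ∇U(0)=0, and ⟨∇U(x),x⟩ ≥ (m/2)‖x‖² for ‖x‖ ≥ K₂ (with 0 < m ≤ L). For γ ∈ (0, m/(4L²)] and all x ∈ ℝ^d, the ULA kernel satisfies ∫ ‖y‖² Q_γ(x, dy) ≤ (1 - mγ/2)‖x‖² + b̃ γ 1_{‖x‖ ≤ K₄}, where K₄ = max(K₂, 2√(2d/m)) and b̃ = 2d + K₄²(γ̄L² + 2L + m/2) with γ̄ = m/(4L²). -/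
open MeasureTheory Real
open scoped BigOperators RealInnerProductSpace

noncomputable section

/-- The standard Gaussian measure on `ℝ^d`. -/
def stdGaussian (d : ℕ) : Measure (Euc d) :=
  (volume : Measure (Euc d)).withDensity
    fun z => ENNReal.ofReal ((2 * Real.pi) ^ (-(d:ℝ)/2) * Real.exp (-‖z‖ ^ 2 / 2))


/-! The Gaussian noise adds exactly `2γd` to the second moment, so the integral equals
`‖x - γ∇U(x)‖² + 2γd ≤ (1 + γ²L²)‖x‖² - 2γ⟪∇U(x), x⟫ + 2γd`. Outside the ball of radius `K₄`
the drift condition gives `-2γ⟪∇U(x), x⟫ ≤ -mγ‖x‖²`, which absorbs both `γ²L²‖x‖² ≤ (mγ/4)‖x‖²`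
and `2γd ≤ (mγ/4)‖x‖²`; inside it, Cauchy–Schwarz gives `-⟪∇U(x), x⟫ ≤ L‖x‖² ≤ LK₄²`, and the
excess over `(1 - mγ/2)‖x‖²` is at most `b̃γ`. -/

theorem MeasureTheory.Measure.pi_withDensity_ofReal {ι : Type*} [Fintype ι] {α : ι → Type*}
    [∀ i, MeasurableSpace (α i)] (μ : ∀ i, Measure (α i)) [∀ i, SigmaFinite (μ i)]
    (f : ∀ i, α i → ℝ) (hf_nonneg : ∀ i x, 0 ≤ f i x) (hf : ∀ i, Integrable (f i) (μ i)) :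
    Measure.pi (fun i => (μ i).withDensity fun x => ENNReal.ofReal (f i x))
      = (Measure.pi μ).withDensity fun x => ENNReal.ofReal (∏ i, f i (x i)) := by
  have := fun i => isFiniteMeasure_withDensity_ofReal (hf i).2
  refine Measure.pi_eq fun s _ => ?_
  have hfs : ∀ i, Integrable (f i) ((μ i).restrict (s i)) := fun i => (hf i).restrict
  rw [withDensity_apply', Measure.restrict_pi_pi,
    ← ofReal_integral_eq_lintegral_ofReal (Integrable.fintype_prod_dep hfs)
      (Filter.Eventually.of_forall fun x => Finset.prod_nonneg fun i _ => hf_nonneg i _),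
    integral_fintype_prod_eq_prod, ENNReal.ofReal_prod_of_nonneg
      fun i _ => integral_nonneg (hf_nonneg i)]
  refine Finset.prod_congr rfl fun i _ => ?_
  rw [withDensity_apply', ofReal_integral_eq_lintegral_ofReal (hfs i)
    (Filter.Eventually.of_forall (hf_nonneg i))]

lemma gaussianDensity_eq_prod_gaussianPDFReal (d : ℕ) (y : Fin d → ℝ) :
    (2 * π) ^ (-(d:ℝ)/2) * exp (-‖WithLp.toLp 2 y‖ ^ 2 / 2)
      = ∏ i, ProbabilityTheory.gaussianPDFReal 0 1 (y i) := by
  simp only [ProbabilityTheory.gaussianPDFReal, Finset.prod_mul_distrib, Finset.prod_const,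
    Finset.card_univ, Fintype.card_fin, ← exp_sum, EuclideanSpace.real_norm_sq_eq]
  congr 1
  · rw [NNReal.coe_one, mul_one, sqrt_eq_rpow, ← rpow_neg (by positivity),
      ← rpow_mul_natCast (by positivity)]
    ring_nf
  · simp [Finset.sum_div, neg_div]

theorem stdGaussian_eq_stdGaussian (d : ℕ) :
    stdGaussian d = ProbabilityTheory.stdGaussian (Euc d) := by
  rw [← ProbabilityTheory.map_pi_eq_stdGaussian,
    ProbabilityTheory.gaussianReal_of_var_ne_zero _ one_ne_zero,
    ProbabilityTheory.gaussianPDF_def, Measure.pi_withDensity_ofReal _ _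
      (fun _ => ProbabilityTheory.gaussianPDFReal_nonneg 0 1)
      (fun _ => ProbabilityTheory.integrable_gaussianPDFReal 0 1), ← volume_pi]
  ext A hA
  rw [stdGaussian, Measure.map_apply (by fun_prop) hA, withDensity_apply _ hA,
    withDensity_apply _ (hA.preimage (by fun_prop)),
    ← (PiLp.volume_preserving_toLp (Fin d)).setLIntegral_comp_preimage hA (by fun_prop)]
  simp_rw [gaussianDensity_eq_prod_gaussianPDFReal]

namespace ProbabilityTheory

variable {E : Type*} [NormedAddCommGroup E] [InnerProductSpace ℝ E] [FiniteDimensional ℝ E]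
  [MeasurableSpace E] [BorelSpace E]

lemma integral_inner_sq_stdGaussian (x : E) :
    ∫ z, ⟪x, z⟫ ^ 2 ∂(stdGaussian E) = ‖x‖ ^ 2 := by
  have h := covarianceBilin_apply (IsGaussian.memLp_two_id (μ := stdGaussian E)) x x
  rw [covarianceBilin_stdGaussian, innerSL_apply_apply, real_inner_self_eq_norm_sq] at h
  simp only [id_eq, integral_id_stdGaussian, sub_zero] at h
  simp_rw [h, sq]

lemma integral_norm_sq_stdGaussian :
    ∫ z, ‖z‖ ^ 2 ∂(stdGaussian E) = Module.finrank ℝ E := by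
  let b := stdOrthonormalBasis ℝ E
  have hint : ∀ i, Integrable (fun z => ⟪b i, z⟫ ^ 2) (stdGaussian E) := fun i =>
    (IsGaussian.memLp_two_id.const_inner (b i)).integrable_sq
  simp_rw [← b.sum_sq_norm_inner_right, Real.norm_eq_abs, sq_abs]
  rw [integral_finsetSum _ fun i _ => hint i]
  simp [integral_inner_sq_stdGaussian, b.orthonormal.1]

lemma integral_norm_add_smul_sq_stdGaussian (a : E) (c : ℝ) :
    ∫ z, ‖a + c • z‖ ^ 2 ∂(stdGaussian E) = ‖a‖ ^ 2 + c ^ 2 * Module.finrank ℝ E := by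
  have hexpand : ∀ z : E, ‖a + c • z‖ ^ 2 = ‖a‖ ^ 2 + 2 * c * ⟪a, z⟫ + c ^ 2 * ‖z‖ ^ 2 := by
    intro z
    rw [norm_add_sq_real, inner_smul_right, norm_smul, mul_pow, Real.norm_eq_abs, sq_abs]
    ring
  have hinner : Integrable (fun z => 2 * c * ⟪a, z⟫) (stdGaussian E) :=
    ((innerSL ℝ a).integrable_comp IsGaussian.integrable_id).const_mul _
  have hnorm_sq : Integrable (fun z => c ^ 2 * ‖z‖ ^ 2) (stdGaussian E) :=
    (IsGaussian.memLp_two_id.integrable_norm_pow two_ne_zero).const_mul _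
  have hconst_inner : Integrable (fun z => ‖a‖ ^ 2 + 2 * c * ⟪a, z⟫) (stdGaussian E) :=
    (integrable_const _).add hinner
  simp_rw [hexpand]
  rw [integral_add hconst_inner hnorm_sq, integral_add (integrable_const _) hinner,
    integral_const_mul, integral_const_mul,
    integral_inner (f := fun z => z) IsGaussian.integrable_id, integral_id_stdGaussian,
    integral_norm_sq_stdGaussian]
  simp

end ProbabilityTheory

section GradientStep

variable {E : Type*} [NormedAddCommGroup E] [InnerProductSpace ℝ E] {x g : E} {L γ : ℝ}

lemma norm_sub_smul_sq_le (hg : ‖g‖ ≤ L * ‖x‖) :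
    ‖x - γ • g‖ ^ 2 ≤ (1 + γ ^ 2 * L ^ 2) * ‖x‖ ^ 2 - 2 * γ * ⟪g, x⟫ := by
  have hg_sq : ‖g‖ ^ 2 ≤ L ^ 2 * ‖x‖ ^ 2 := by
    rw [← mul_pow]; exact pow_le_pow_left₀ (norm_nonneg g) hg 2
  rw [norm_sub_sq_real, inner_smul_right, norm_smul, mul_pow, Real.norm_eq_abs, sq_abs,
    real_inner_comm]
  nlinarith [sq_nonneg γ]

lemma norm_sub_smul_sq_add_le_of_inner_ge {m D : ℝ} (hγ : 0 ≤ γ) (hγL : γ * L ^ 2 ≤ m / 4)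
    (hg : ‖g‖ ≤ L * ‖x‖) (hdrift : m / 2 * ‖x‖ ^ 2 ≤ ⟪g, x⟫) (hD : 8 * D ≤ m * ‖x‖ ^ 2) :
    ‖x - γ • g‖ ^ 2 + 2 * γ * D ≤ (1 - m * γ / 2) * ‖x‖ ^ 2 := by
  have hstep := norm_sub_smul_sq_le (γ := γ) hg
  have h1 : γ * (γ * L ^ 2) * ‖x‖ ^ 2 ≤ γ * (m / 4) * ‖x‖ ^ 2 := by gcongr
  have h2 : γ * (m / 2 * ‖x‖ ^ 2) ≤ γ * ⟪g, x⟫ := by gcongr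
  have h3 : γ * (8 * D) ≤ γ * (m * ‖x‖ ^ 2) := by gcongr
  nlinarith

lemma norm_sub_smul_sq_add_le_of_norm_le {m D K γ₀ : ℝ} (hL : 0 ≤ L) (hm : 0 ≤ m)
    (hγ : 0 ≤ γ) (hγγ₀ : γ ≤ γ₀) (hg : ‖g‖ ≤ L * ‖x‖) (hx : ‖x‖ ≤ K) :
    ‖x - γ • g‖ ^ 2 + 2 * γ * D
      ≤ (1 - m * γ / 2) * ‖x‖ ^ 2 + (2 * D + K ^ 2 * (γ₀ * L ^ 2 + 2 * L + m / 2)) * γ := by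
  have hstep := norm_sub_smul_sq_le (γ := γ) hg
  have hinner : -⟪g, x⟫ ≤ L * ‖x‖ ^ 2 := by
    nlinarith [neg_le_abs ⟪g, x⟫, abs_real_inner_le_norm g x, norm_nonneg x]
  have hx_sq : ‖x‖ ^ 2 ≤ K ^ 2 := pow_le_pow_left₀ (norm_nonneg x) hx 2
  have hγ₀ : 0 ≤ γ₀ := hγ.trans hγγ₀
  have h1 : γ * (γ * L ^ 2) * ‖x‖ ^ 2 ≤ γ * (γ₀ * L ^ 2) * ‖x‖ ^ 2 := by gcongr
  have h2 : γ * (-⟪g, x⟫) ≤ γ * (L * ‖x‖ ^ 2) := by gcongr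
  have h3 : γ * ‖x‖ ^ 2 * (γ₀ * L ^ 2 + 2 * L + m / 2)
      ≤ γ * K ^ 2 * (γ₀ * L ^ 2 + 2 * L + m / 2) := by gcongr
  nlinarith

end GradientStep

theorem stmt_9_general {d : ℕ} (U : Euc d → ℝ) (L m K₂ : ℝ)
    (hLip : ∀ x y, ‖gradient U x - gradient U y‖ ≤ L * ‖x - y‖)
    (h0 : gradient U 0 = 0)
    (hm : 0 < m) (hmL : m ≤ L)
    (hdrift : ∀ x : Euc d, K₂ ≤ ‖x‖ → (m/2) * ‖x‖ ^ 2 ≤ ⟪gradient U x, x⟫)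
    (γ : ℝ) (hγ : γ ∈ Set.Ioc 0 (m/(4*L^2))) (x : Euc d) :
    ∫ z, ‖x - γ • gradient U x + Real.sqrt (2*γ) • z‖ ^ 2 ∂(stdGaussian d)
      ≤ (1 - m*γ/2) * ‖x‖ ^ 2
        + (2*(d:ℝ) + (max K₂ (2*Real.sqrt (2*(d:ℝ)/m))) ^ 2
            * ((m/(4*L^2))*L^2 + 2*L + m/2)) * γ
          * (if ‖x‖ ≤ max K₂ (2*Real.sqrt (2*(d:ℝ)/m)) then 1 else 0) := by
  obtain ⟨hγ_pos, hγ_le⟩ := hγ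
  have hL : 0 < L := hm.trans_le hmL
  have hg : ‖gradient U x‖ ≤ L * ‖x‖ := by simpa [h0] using hLip x 0
  rw [stdGaussian_eq_stdGaussian, ProbabilityTheory.integral_norm_add_smul_sq_stdGaussian,
    finrank_euclideanSpace_fin, sq_sqrt (by positivity)]
  split_ifs with hx
  · rw [mul_one]
    exact norm_sub_smul_sq_add_le_of_norm_le hL.le hm.le hγ_pos.le hγ_le hg hx
  · rw [mul_zero, add_zero]
    obtain ⟨hK₂, hK_sqrt⟩ := max_lt_iff.mp (not_le.mp hx)
    have hγL : γ * L ^ 2 ≤ m / 4 := by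
      rw [le_div_iff₀ (by positivity)] at hγ_le; linarith
    have hd : 8 * (d : ℝ) ≤ m * ‖x‖ ^ 2 := by
      have := pow_le_pow_left₀ (by positivity) hK_sqrt.le 2
      rw [mul_pow, sq_sqrt (by positivity), ← mul_div_assoc, div_le_iff₀ hm] at this
      linarith
    exact norm_sub_smul_sq_add_le_of_inner_ge hγ_pos.le hγL hg (hdrift x hK₂.le) hd

theorem stmt_9 {d : ℕ} (U : Euc d → ℝ) (L m K₂ : ℝ)
    (hLip : ∀ x y, ‖gradient U x - gradient U y‖ ≤ L * ‖x - y‖)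
    (h0 : gradient U 0 = 0)
    (hm : 0 < m) (hmL : m ≤ L) (hK₂ : 0 ≤ K₂)
    (hdrift : ∀ x : Euc d, K₂ ≤ ‖x‖ → (m/2) * ‖x‖ ^ 2 ≤ ⟪gradient U x, x⟫)
    (γ : ℝ) (hγ : γ ∈ Set.Ioc 0 (m/(4*L^2))) (x : Euc d) :
    ∫ z, ‖x - γ • gradient U x + Real.sqrt (2*γ) • z‖ ^ 2 ∂(stdGaussian d)
      ≤ (1 - m*γ/2) * ‖x‖ ^ 2
        + (2*(d:ℝ) + (max K₂ (2*Real.sqrt (2*(d:ℝ)/m))) ^ 2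
            * ((m/(4*L^2))*L^2 + 2*L + m/2)) * γ
          * (if ‖x‖ ≤ max K₂ (2*Real.sqrt (2*(d:ℝ)/m)) then 1 else 0) :=
  stmt_9_general U L m K₂ hLip h0 hm hmL hdrift γ hγ x
end
end

section
/- Let R_γ (MALA) and Q_γ (ULA) be the Metropolis-adjusted and unadjusted Langevin kernels with the same proposal. For any bounded measurable f and any x, |Q_γ f(x) - R_γ f(x)| ≤ 2‖f‖_∞ E[ |τ_γ(x, Z)| ], where τ_γ(x,z) is the log Metropolis ratio and Z standard Gaussian. In particular, if |τ_γ(x,z)| ≤ C γ^{3/2}(1 + ‖z‖⁴ + ‖x‖²), then ‖δ_x Q_γ - δ_x R_γ‖_TV ≤ C' γ^{3/2}(1 + ‖x‖²). -/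
/-! The two kernels differ only on rejection, where the chain stays at `x` instead of moving to
the proposal `y`; hence `Q_γ f(x) - R_γ f(x) = ∫ (f y - f x) (1 - min 1 (e^{-τ})) dφ`, and
`1 - min 1 (e^{-t}) ≤ |t|` gives the bound `2 ‖f‖_∞ ∫ |τ| dφ`. Under the polynomial bound on `τ`
this is at most `2 C γ^{3/2} (1 + ‖x‖²) ∫ (1 + ‖z‖⁴) dφ`, and the fourth Gaussian moment is finite
because `‖z‖⁴ e^{-‖z‖²/2} ≤ 32 e^{-‖z‖²/4}`. -/

open MeasureTheory Real
open scoped BigOperators RealInnerProductSpace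

noncomputable section

/-- One step of ULA applied to a test function. -/
def ulaInt {d : ℕ} (U f : Euc d → ℝ) (γ : ℝ) (x : Euc d) : ℝ :=
  ∫ z, f (x - γ • gradient U x + Real.sqrt (2*γ) • z) ∂(stdGaussian d)

/-- One step of the Metropolis-adjusted kernel with log-ratio `τ`, applied to `f`. -/
def malaInt {d : ℕ} (U f : Euc d → ℝ) (τ : Euc d → ℝ) (γ : ℝ) (x : Euc d) : ℝ :=
  ∫ z, (f (x - γ • gradient U x + Real.sqrt (2*γ) • z) * min 1 (Real.exp (-τ z))
        + f x * (1 - min 1 (Real.exp (-τ z)))) ∂(stdGaussian d)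

lemma integrable_exp_neg_mul_norm_sq {V : Type*} [NormedAddCommGroup V] [InnerProductSpace ℝ V]
    [FiniteDimensional ℝ V] [MeasurableSpace V] [BorelSpace V] {b : ℝ} (hb : 0 < b) :
    Integrable fun v : V => exp (-b * ‖v‖ ^ 2) :=
  .of_integral_ne_zero (by rw [GaussianFourier.integral_rexp_neg_mul_sq_norm hb]; positivity)

lemma integrable_stdGaussian_density (d : ℕ) :
    Integrable fun z : Euc d => (2 * π) ^ (-(d:ℝ)/2) * exp (-‖z‖ ^ 2 / 2) := by
  refine ((integrable_exp_neg_mul_norm_sq (b := 1 / 2) (by norm_num)).const_mul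
    ((2 * π) ^ (-(d:ℝ)/2))).congr (ae_of_all _ fun z => ?_)
  ring_nf

instance (d : ℕ) : IsFiniteMeasure (stdGaussian d) :=
  isFiniteMeasure_withDensity_ofReal (integrable_stdGaussian_density d).2

lemma integrable_stdGaussian_iff {d : ℕ} {g : Euc d → ℝ} :
    Integrable g (stdGaussian d) ↔
      Integrable fun z => g z * ((2 * π) ^ (-(d:ℝ)/2) * exp (-‖z‖ ^ 2 / 2)) := by
  rw [stdGaussian, integrable_withDensity_iff (by fun_prop)
    (ae_of_all _ fun _ => ENNReal.ofReal_lt_top)]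
  have hpos : ∀ z : Euc d, 0 ≤ (2 * π) ^ (-(d:ℝ)/2) * exp (-‖z‖ ^ 2 / 2) := fun _ => by positivity
  simp only [ENNReal.toReal_ofReal (hpos _)]

lemma sq_mul_exp_neg_half_le {s : ℝ} (hs : 0 ≤ s) : s ^ 2 * exp (-s / 2) ≤ 32 * exp (-s / 4) := by
  have hpoly : s ^ 2 ≤ 32 * exp (s / 4) := by
    have := pow_div_factorial_le_exp _ (div_nonneg hs zero_le_four) 2
    norm_num [Nat.factorial] at this
    linarith
  calc s ^ 2 * exp (-s / 2) ≤ 32 * exp (s / 4) * exp (-s / 2) := by gcongr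
    _ = 32 * exp (-s / 4) := by rw [mul_assoc, ← exp_add]; ring_nf

lemma integrable_one_add_norm_pow_four_stdGaussian (d : ℕ) :
    Integrable (fun z : Euc d => 1 + ‖z‖ ^ 4) (stdGaussian d) := by
  rw [integrable_stdGaussian_iff]
  set c : ℝ := (2 * π) ^ (-(d:ℝ)/2)
  have hdom : Integrable fun z : Euc d =>
      c * exp (-(1/2) * ‖z‖ ^ 2) + 32 * c * exp (-(1/4) * ‖z‖ ^ 2) :=
    ((integrable_exp_neg_mul_norm_sq (by norm_num)).const_mul c).add
      ((integrable_exp_neg_mul_norm_sq (by norm_num)).const_mul (32 * c))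
  refine hdom.mono' (by fun_prop) (ae_of_all _ fun z => ?_)
  have hc : 0 ≤ c := by positivity
  have htail := sq_mul_exp_neg_half_le (sq_nonneg ‖z‖)
  rw [Real.norm_of_nonneg (by positivity)]
  calc (1 + ‖z‖ ^ 4) * (c * exp (-‖z‖ ^ 2 / 2))
      = c * exp (-‖z‖ ^ 2 / 2) + c * ((‖z‖ ^ 2) ^ 2 * exp (-‖z‖ ^ 2 / 2)) := by ring
    _ ≤ c * exp (-‖z‖ ^ 2 / 2) + c * (32 * exp (-‖z‖ ^ 2 / 4)) := by gcongr
    _ = c * exp (-(1/2) * ‖z‖ ^ 2) + 32 * c * exp (-(1/4) * ‖z‖ ^ 2) := by ring_nf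

lemma integral_abs_le_of_abs_le_one_add_norm_pow_four {d : ℕ} {τ : Euc d → ℝ} {K s : ℝ}
    (hτ : Measurable τ) (hK : 0 ≤ K) (hs : 0 ≤ s) (hbound : ∀ z, |τ z| ≤ K * (1 + ‖z‖ ^ 4 + s)) :
    Integrable τ (stdGaussian d) ∧
      ∫ z, |τ z| ∂stdGaussian d ≤ K * (1 + s) * ∫ z, (1 + ‖z‖ ^ 4) ∂stdGaussian d := by
  have hmoment := integrable_one_add_norm_pow_four_stdGaussian d
  have hfactor : ∀ z, |τ z| ≤ K * (1 + s) * (1 + ‖z‖ ^ 4) := fun z =>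
    (hbound z).trans <| (mul_le_mul_of_nonneg_left
      (by nlinarith [pow_nonneg (norm_nonneg z) 4]) hK).trans_eq (mul_assoc _ _ _).symm
  refine ⟨(hmoment.const_mul _).mono' hτ.aestronglyMeasurable (ae_of_all _ hfactor), ?_⟩
  rw [← integral_const_mul]
  exact integral_mono_of_nonneg (ae_of_all _ fun _ => abs_nonneg _) (hmoment.const_mul _)
    (ae_of_all _ hfactor)

lemma one_sub_min_one_exp_neg_nonneg (t : ℝ) : 0 ≤ 1 - min 1 (exp (-t)) :=
  sub_nonneg.2 (min_le_left _ _)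

lemma one_sub_min_one_exp_neg_le_abs (t : ℝ) : 1 - min 1 (exp (-t)) ≤ |t| := by
  rcases le_or_gt 0 t with ht | ht
  · rw [min_eq_right (exp_le_one_iff.2 (neg_nonpos.2 ht)), abs_of_nonneg ht]
    linarith [add_one_le_exp (-t)]
  · rw [min_eq_left (one_le_exp (neg_nonneg.2 ht.le))]
    simp

/-- `g` is the value of the test function at the proposal and `c` its value at the current point;
the two integrals are the unadjusted and the Metropolis-adjusted kernels. -/
lemma abs_integral_sub_integral_metropolis_le {Ω : Type*} [MeasurableSpace Ω] {μ : Measure Ω}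
    [IsFiniteMeasure μ] {g τ : Ω → ℝ} {c B : ℝ} (hg : AEStronglyMeasurable g μ)
    (hgB : ∀ z, |g z| ≤ B) (hcB : |c| ≤ B) (hτ : Integrable τ μ) :
    |∫ z, g z ∂μ - ∫ z, (g z * min 1 (exp (-τ z)) + c * (1 - min 1 (exp (-τ z)))) ∂μ|
      ≤ 2 * B * ∫ z, |τ z| ∂μ := by
  set r : Ω → ℝ := fun z => 1 - min 1 (exp (-τ z))
  have hr : AEStronglyMeasurable r μ := by
    have hcont : Continuous fun t : ℝ => 1 - min 1 (exp (-t)) := by fun_prop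
    exact hcont.comp_aestronglyMeasurable hτ.1
  have hg_int : Integrable g μ := .of_bound hg B (ae_of_all _ hgB)
  have hpointwise : ∀ z, ‖(g z - c) * r z‖ ≤ 2 * B * |τ z| := fun z => by
    rw [Real.norm_eq_abs, abs_mul, abs_of_nonneg (one_sub_min_one_exp_neg_nonneg _)]
    have hgc : |g z - c| ≤ 2 * B := by linarith [abs_sub (g z) c, hgB z]
    exact mul_le_mul hgc (one_sub_min_one_exp_neg_le_abs _) (one_sub_min_one_exp_neg_nonneg _)
      ((abs_nonneg _).trans hgc)
  have hrej_int : Integrable (fun z => (g z - c) * r z) μ :=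
    (hτ.abs.const_mul (2 * B)).mono' ((hg.sub aestronglyMeasurable_const).mul hr)
      (ae_of_all _ hpointwise)
  have hmala : ∫ z, (g z * min 1 (exp (-τ z)) + c * r z) ∂μ
      = ∫ z, g z ∂μ - ∫ z, (g z - c) * r z ∂μ := by
    rw [← integral_sub hg_int hrej_int]
    congr 1 with z
    ring
  calc |∫ z, g z ∂μ - ∫ z, (g z * min 1 (exp (-τ z)) + c * r z) ∂μ|
      = ‖∫ z, (g z - c) * r z ∂μ‖ := by rw [hmala, sub_sub_cancel, Real.norm_eq_abs]
    _ ≤ ∫ z, 2 * B * |τ z| ∂μ :=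
      norm_integral_le_of_norm_le (hτ.abs.const_mul _) (ae_of_all _ hpointwise)
    _ = 2 * B * ∫ z, |τ z| ∂μ := integral_const_mul _ _

lemma abs_ulaInt_sub_malaInt_le {d : ℕ} {U f τ : Euc d → ℝ} {γ B : ℝ} {x : Euc d}
    (hf : Measurable f) (hfB : ∀ y, |f y| ≤ B) (hτ : Integrable τ (stdGaussian d)) :
    |ulaInt U f γ x - malaInt U f τ γ x| ≤ 2 * B * ∫ z, |τ z| ∂stdGaussian d :=
  abs_integral_sub_integral_metropolis_le (hf.comp (by fun_prop)).aestronglyMeasurable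
    (fun _ => hfB _) (hfB x) hτ

theorem stmt_10_general {d : ℕ} (U : Euc d → ℝ) (γbar : ℝ)
    (τ : ℝ → Euc d → Euc d → ℝ)
    (hτmeas : ∀ γ x, Measurable (τ γ x)) :
    (∀ γ : ℝ, 0 < γ → ∀ (x : Euc d) (f : Euc d → ℝ) (B : ℝ), Measurable f →
      (∀ y, |f y| ≤ B) →
      Integrable (fun z => τ γ x z) (stdGaussian d) →
      |ulaInt U f γ x - malaInt U f (τ γ x) γ x|
        ≤ 2 * B * ∫ z, |τ γ x z| ∂(stdGaussian d)) ∧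
    (∀ C : ℝ, 0 ≤ C →
      (∀ γ ∈ Set.Ioc (0:ℝ) γbar, ∀ x z : Euc d,
        |τ γ x z| ≤ C * γ ^ ((3:ℝ)/2) * (1 + ‖z‖ ^ 4 + ‖x‖ ^ 2)) →
      ∃ C' : ℝ, ∀ γ ∈ Set.Ioc (0:ℝ) γbar, ∀ (x : Euc d) (f : Euc d → ℝ),
        Measurable f → (∀ y, |f y| ≤ 1) →
        |ulaInt U f γ x - malaInt U f (τ γ x) γ x|
          ≤ C' * γ ^ ((3:ℝ)/2) * (1 + ‖x‖ ^ 2)) := by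
  refine ⟨fun γ _ x f B hf hfB hτ => abs_ulaInt_sub_malaInt_le hf hfB hτ, fun C hC hτC => ?_⟩
  set M := ∫ z, (1 + ‖z‖ ^ 4) ∂stdGaussian d
  refine ⟨2 * C * M, fun γ hγ x f hf hf1 => ?_⟩
  have hK : 0 ≤ C * γ ^ ((3:ℝ)/2) := mul_nonneg hC (rpow_nonneg hγ.1.le _)
  obtain ⟨hτint, hτle⟩ := integral_abs_le_of_abs_le_one_add_norm_pow_four (hτmeas γ x) hK
    (sq_nonneg ‖x‖) (hτC γ hγ x)
  calc |ulaInt U f γ x - malaInt U f (τ γ x) γ x|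
      ≤ 2 * 1 * ∫ z, |τ γ x z| ∂stdGaussian d := abs_ulaInt_sub_malaInt_le hf hf1 hτint
    _ ≤ 2 * 1 * (C * γ ^ ((3:ℝ)/2) * (1 + ‖x‖ ^ 2) * M) := by gcongr
    _ = 2 * C * M * γ ^ ((3:ℝ)/2) * (1 + ‖x‖ ^ 2) := by ring

theorem stmt_10 {d : ℕ} (U : Euc d → ℝ) (γbar : ℝ) (hγbar : 0 < γbar)
    (τ : ℝ → Euc d → Euc d → ℝ)
    (hτmeas : ∀ γ x, Measurable (τ γ x)) :
    (∀ γ : ℝ, 0 < γ → ∀ (x : Euc d) (f : Euc d → ℝ) (B : ℝ), Measurable f →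
      (∀ y, |f y| ≤ B) →
      Integrable (fun z => τ γ x z) (stdGaussian d) →
      |ulaInt U f γ x - malaInt U f (τ γ x) γ x|
        ≤ 2 * B * ∫ z, |τ γ x z| ∂(stdGaussian d)) ∧
    (∀ C : ℝ, 0 ≤ C →
      (∀ γ ∈ Set.Ioc (0:ℝ) γbar, ∀ x z : Euc d,
        |τ γ x z| ≤ C * γ ^ ((3:ℝ)/2) * (1 + ‖z‖ ^ 4 + ‖x‖ ^ 2)) →
      ∃ C' : ℝ, ∀ γ ∈ Set.Ioc (0:ℝ) γbar, ∀ (x : Euc d) (f : Euc d → ℝ),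
        Measurable f → (∀ y, |f y| ≤ 1) →
        |ulaInt U f γ x - malaInt U f (τ γ x) γ x|
          ≤ C' * γ ^ ((3:ℝ)/2) * (1 + ‖x‖ ^ 2)) :=
  stmt_10_general U γbar τ hτmeas
end
end

section
/- For two Markov kernels Q and R on ℝ^d satisfying (i) sup over bounded f with ‖f‖_∞ ≤ 1 of |δ_x(Q - R) R^j f| ≤ ε(1 + ‖x‖²) for all x and j, and (ii) the moment contraction ∫‖y‖² Q(x,dy) ≤ (1-λ)‖x‖² + c for some λ ∈ (0,1), c ≥ 0, one has for every n ≥ 1: ‖δ_x Q^n - δ_x R^n‖_TV ≤ ε Σ_{k=0}^{n-1} (1 + (1-λ)^k ‖x‖² + c/λ) ≤ ε n (1 + c/λ) + ε‖x‖²/λ. -/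
open MeasureTheory Real
open scoped BigOperators RealInnerProductSpace

noncomputable section

open ProbabilityTheory
open scoped ProbabilityTheory

/-- `n`-fold composition of a Markov kernel with itself. -/
noncomputable def kpow {α : Type*} [MeasurableSpace α] (κ : Kernel α α) : ℕ → Kernel α α
  | 0 => Kernel.deterministic id measurable_id
  | n+1 => κ ∘ₖ kpow κ n

section Aux

variable {α : Type*} [MeasurableSpace α]

lemma kpow_zero (κ : Kernel α α) : kpow κ 0 = Kernel.id := rfl

lemma kpow_succ (κ : Kernel α α) (n : ℕ) : kpow κ (n+1) = κ ∘ₖ kpow κ n := rfl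

instance kpow_markov (κ : Kernel α α) [IsMarkovKernel κ] (n : ℕ) :
    IsMarkovKernel (kpow κ n) := by
  induction n with
  | zero => rw [kpow_zero]; infer_instance
  | succ n ih => rw [kpow_succ]; infer_instance

lemma kpow_succ' (κ : Kernel α α) [IsMarkovKernel κ] (n : ℕ) :
    kpow κ (n+1) = kpow κ n ∘ₖ κ := by
  induction n with
  | zero => rw [kpow_succ, kpow_zero, Kernel.comp_id, Kernel.id_comp]
  | succ n ih =>
      calc kpow κ (n+2) = κ ∘ₖ kpow κ (n+1) := rfl
        _ = κ ∘ₖ (kpow κ n ∘ₖ κ) := by rw [ih]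
        _ = (κ ∘ₖ kpow κ n) ∘ₖ κ := (Kernel.comp_assoc _ _ _).symm
        _ = kpow κ (n+1) ∘ₖ κ := rfl

lemma integral_comp_kernel (η κ : Kernel α α) [IsSFiniteKernel η] [IsSFiniteKernel κ]
    (a : α) {f : α → ℝ} (hf : Measurable f) (hint : Integrable f ((η ∘ₖ κ) a)) :
    ∫ z, f z ∂((η ∘ₖ κ) a) = ∫ y, ∫ z, f z ∂(η y) ∂(κ a) := by
  have hmap : (η ∘ₖ κ) a = ((κ ⊗ₖ Kernel.prodMkLeft α η) a).map Prod.snd := by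
    rw [Kernel.comp_eq_snd_compProd, Kernel.snd_apply]
  have hint' : Integrable (fun p : α × α => f p.2) ((κ ⊗ₖ Kernel.prodMkLeft α η) a) := by
    rw [hmap] at hint
    exact (integrable_map_measure hf.aestronglyMeasurable measurable_snd.aemeasurable).mp hint
  rw [hmap, integral_map measurable_snd.aemeasurable hf.aestronglyMeasurable,
    ProbabilityTheory.integral_compProd hint']
  simp [Kernel.prodMkLeft_apply]

lemma measurable_kernel_integral (κ : Kernel α α) [IsSFiniteKernel κ] {f : α → ℝ}
    (hf : Measurable f) : Measurable fun x => ∫ y, f y ∂(κ x) := by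
  have : StronglyMeasurable (Function.uncurry fun (_ : α) (y : α) => f y) :=
    (hf.comp measurable_snd).stronglyMeasurable
  exact (MeasureTheory.StronglyMeasurable.integral_kernel_prod_right (κ := κ) this).measurable

lemma integrable_of_bdd {μ : Measure α} [IsProbabilityMeasure μ] {f : α → ℝ}
    (hf : Measurable f) (hb : ∀ y, |f y| ≤ 1) : Integrable f μ := by
  refine (integrable_const (1:ℝ)).mono' hf.aestronglyMeasurable ?_
  exact Filter.Eventually.of_forall fun y => by simpa [Real.norm_eq_abs] using hb y

lemma abs_integral_le_one {μ : Measure α} [IsProbabilityMeasure μ] {f : α → ℝ}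
    (hf : Measurable f) (hb : ∀ y, |f y| ≤ 1) : |∫ y, f y ∂μ| ≤ 1 := by
  calc |∫ y, f y ∂μ| ≤ ∫ y, |f y| ∂μ := by
        simpa [Real.norm_eq_abs] using norm_integral_le_integral_norm (μ := μ) f
    _ ≤ ∫ _y, (1:ℝ) ∂μ := integral_mono (integrable_of_bdd hf hb).abs (integrable_const 1)
        fun y => hb y
    _ = 1 := by simp

end Aux

lemma mom_bound {d : ℕ} (Q : Kernel (Euc d) (Euc d)) [IsMarkovKernel Q] {lam c : ℝ}
    (hlam0 : 0 < lam) (hlam1 : lam < 1) (hc : 0 ≤ c)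
    (hmom : ∀ (k : ℕ) (x : Euc d), Integrable (fun y => ‖y‖ ^ 2) (kpow Q k x))
    (hcontr : ∀ x, ∫ y, ‖y‖ ^ 2 ∂(Q x) ≤ (1 - lam) * ‖x‖ ^ 2 + c) :
    ∀ (k : ℕ) (x : Euc d),
      ∫ y, ‖y‖ ^ 2 ∂(kpow Q k x) ≤ (1 - lam) ^ k * ‖x‖ ^ 2 + c / lam := by
  have hmeas : Measurable fun y : Euc d => ‖y‖ ^ 2 := (measurable_norm.pow_const 2)
  intro k
  induction k with
  | zero =>
      intro x
      rw [kpow_zero, Kernel.id_apply, integral_dirac' _ x hmeas.stronglyMeasurable]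
      have : 0 ≤ c / lam := div_nonneg hc hlam0.le
      simp only [pow_zero, one_mul]; linarith
  | succ k ih =>
      intro x
      have hsplit : ∫ y, ‖y‖ ^ 2 ∂(kpow Q (k+1) x)
          = ∫ y, (∫ z, ‖z‖ ^ 2 ∂(Q y)) ∂(kpow Q k x) := by
        rw [kpow_succ]
        exact integral_comp_kernel Q (kpow Q k) x hmeas (by rw [← kpow_succ]; exact hmom (k+1) x)
      have hg_meas := measurable_kernel_integral Q hmeas
      have hbd_int : Integrable (fun y : Euc d => (1 - lam) * ‖y‖ ^ 2 + c) (kpow Q k x) :=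
        ((hmom k x).const_mul _).add (integrable_const c)
      have hg_int : Integrable (fun y : Euc d => ∫ z, ‖z‖ ^ 2 ∂(Q y)) (kpow Q k x) := by
        refine hbd_int.mono' hg_meas.aestronglyMeasurable ?_
        refine Filter.Eventually.of_forall fun y => ?_
        have h0 : 0 ≤ ∫ z, ‖z‖ ^ 2 ∂(Q y) :=
          integral_nonneg fun z => by positivity
        rw [Real.norm_eq_abs, abs_of_nonneg h0]
        exact hcontr y
      have hstep : ∫ y, (∫ z, ‖z‖ ^ 2 ∂(Q y)) ∂(kpow Q k x)
          ≤ ∫ y, ((1 - lam) * ‖y‖ ^ 2 + c) ∂(kpow Q k x) :=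
        integral_mono hg_int hbd_int fun y => hcontr y
      have heq : ∫ y, ((1 - lam) * ‖y‖ ^ 2 + c) ∂(kpow Q k x)
          = (1 - lam) * (∫ y, ‖y‖ ^ 2 ∂(kpow Q k x)) + c := by
        rw [integral_add ((hmom k x).const_mul _) (integrable_const c),
          integral_const_mul, integral_const]
        simp
      have hmul : (1 - lam) * (∫ y, ‖y‖ ^ 2 ∂(kpow Q k x))
          ≤ (1 - lam) * ((1 - lam) ^ k * ‖x‖ ^ 2 + c / lam) :=
        mul_le_mul_of_nonneg_left (ih x) (by linarith)
      have halg : (1 - lam) * ((1 - lam) ^ k * ‖x‖ ^ 2 + c / lam) + c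
          = (1 - lam) ^ (k+1) * ‖x‖ ^ 2 + c / lam := by
        field_simp; ring
      rw [hsplit]
      calc _ ≤ (1 - lam) * (∫ y, ‖y‖ ^ 2 ∂(kpow Q k x)) + c := by rw [← heq]; exact hstep
        _ ≤ (1 - lam) * ((1 - lam) ^ k * ‖x‖ ^ 2 + c / lam) + c := by linarith
        _ = _ := halg

theorem stmt_11 {d : ℕ} (Q R : Kernel (Euc d) (Euc d))
    [IsMarkovKernel Q] [IsMarkovKernel R]
    (ε lam c : ℝ) (hε : 0 ≤ ε) (hlam : lam ∈ Set.Ioo (0:ℝ) 1) (hc : 0 ≤ c)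
    (hmom : ∀ (k : ℕ) (x : Euc d), Integrable (fun y => ‖y‖ ^ 2) (kpow Q k x))
    (hQR : ∀ (x : Euc d) (j : ℕ) (f : Euc d → ℝ), Measurable f → (∀ y, |f y| ≤ 1) →
      |(∫ y, (∫ u, f u ∂(kpow R j y)) ∂(Q x)) - ∫ y, (∫ u, f u ∂(kpow R j y)) ∂(R x)|
        ≤ ε * (1 + ‖x‖ ^ 2))
    (hcontr : ∀ x, ∫ y, ‖y‖ ^ 2 ∂(Q x) ≤ (1 - lam) * ‖x‖ ^ 2 + c) :
    ∀ n : ℕ, 1 ≤ n → ∀ (x : Euc d) (f : Euc d → ℝ), Measurable f → (∀ y, |f y| ≤ 1) →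
      |(∫ u, f u ∂(kpow Q n x)) - ∫ u, f u ∂(kpow R n x)|
        ≤ ε * ∑ k ∈ Finset.range n, (1 + (1-lam) ^ k * ‖x‖ ^ 2 + c/lam) ∧
      ε * ∑ k ∈ Finset.range n, (1 + (1-lam) ^ k * ‖x‖ ^ 2 + c/lam)
        ≤ ε * n * (1 + c/lam) + ε * ‖x‖ ^ 2 / lam := by
  obtain ⟨hlam0, hlam1⟩ := hlam
  intro n hn x f hfm hfb
  have hX : (0:ℝ) ≤ ‖x‖ ^ 2 := by positivity
  constructor
  · -- main bound
    set F : ℕ → Euc d → ℝ := fun j y => ∫ u, f u ∂(kpow R j y) with hFdef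
    have hFm : ∀ j, Measurable (F j) := fun j => measurable_kernel_integral (kpow R j) hfm
    have hFb : ∀ j y, |F j y| ≤ 1 := fun j y => abs_integral_le_one hfm hfb
    have hF0 : ∀ y, F 0 y = f y := fun y => by
      simp only [hFdef, kpow_zero, Kernel.id_apply]
      exact integral_dirac' _ y hfm.stronglyMeasurable
    have hFsucc : ∀ (j : ℕ) (y : Euc d), F (j+1) y = ∫ u, F j u ∂(R y) := by
      intro j y
      simp only [hFdef]
      rw [kpow_succ']
      exact integral_comp_kernel (kpow R j) R y hfm
        (by rw [← kpow_succ']; exact integrable_of_bdd hfm hfb)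
    set T : ℕ → ℝ := fun k => ∫ y, F (n - k) y ∂(kpow Q k x) with hTdef
    have hT0 : T 0 = ∫ u, f u ∂(kpow R n x) := by
      simp only [hTdef, kpow_zero, Kernel.id_apply, Nat.sub_zero]
      exact integral_dirac' _ x (hFm n).stronglyMeasurable
    have hTn : T n = ∫ u, f u ∂(kpow Q n x) := by
      simp only [hTdef, Nat.sub_self]
      exact integral_congr_ae (Filter.Eventually.of_forall fun y => hF0 y)
    have key : ∀ k, k < n → |T (k+1) - T k| ≤ ε * (1 + (1-lam) ^ k * ‖x‖ ^ 2 + c/lam) := by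
      intro k hk
      obtain ⟨j, hj⟩ : ∃ j, n - k = j + 1 := ⟨n - k - 1, by omega⟩
      have hj' : n - (k+1) = j := by omega
      set G : Euc d → ℝ := fun y => ∫ u, F j u ∂(Q y) with hGdef
      set H : Euc d → ℝ := fun y => ∫ u, F j u ∂(R y) with hHdef
      have hGm : Measurable G := measurable_kernel_integral Q (hFm j)
      have hHm : Measurable H := measurable_kernel_integral R (hFm j)
      have hGb : ∀ y, |G y| ≤ 1 := fun y => abs_integral_le_one (hFm j) (hFb j)
      have hHb : ∀ y, |H y| ≤ 1 := fun y => abs_integral_le_one (hFm j) (hFb j)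
      have hGint : Integrable G (kpow Q k x) := integrable_of_bdd hGm hGb
      have hHint : Integrable H (kpow Q k x) := integrable_of_bdd hHm hHb
      have hTk1 : T (k+1) = ∫ y, G y ∂(kpow Q k x) := by
        simp only [hTdef, hj', hGdef, hFdef]
        rw [kpow_succ]
        exact integral_comp_kernel Q (kpow Q k) x (hFm j)
          (by rw [← kpow_succ]; exact integrable_of_bdd (hFm j) (hFb j))
      have hTk : T k = ∫ y, H y ∂(kpow Q k x) := by
        simp only [hTdef, hj, hHdef]
        exact integral_congr_ae (Filter.Eventually.of_forall fun y => hFsucc j y)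
      have hptw : ∀ y, |G y - H y| ≤ ε * (1 + ‖y‖ ^ 2) := fun y =>
        hQR y j f hfm hfb
      have hbd_int : Integrable (fun y : Euc d => ε * (1 + ‖y‖ ^ 2)) (kpow Q k x) :=
        (((integrable_const (1:ℝ)).add (hmom k x)).const_mul ε)
      calc |T (k+1) - T k| = |∫ y, (G y - H y) ∂(kpow Q k x)| := by
            rw [hTk1, hTk, integral_sub hGint hHint]
        _ ≤ ∫ y, |G y - H y| ∂(kpow Q k x) := by
            simpa [Real.norm_eq_abs] using
              norm_integral_le_integral_norm (μ := kpow Q k x) (fun y => G y - H y)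
        _ ≤ ∫ y, ε * (1 + ‖y‖ ^ 2) ∂(kpow Q k x) :=
            integral_mono (hGint.sub hHint).abs hbd_int hptw
        _ = ε * (1 + ∫ y, ‖y‖ ^ 2 ∂(kpow Q k x)) := by
            rw [integral_const_mul, integral_add (integrable_const 1) (hmom k x),
              integral_const]
            simp
        _ ≤ ε * (1 + ((1-lam) ^ k * ‖x‖ ^ 2 + c/lam)) := by
            have := mom_bound Q hlam0 hlam1 hc hmom hcontr k x
            have h1 : (1:ℝ) + ∫ y, ‖y‖ ^ 2 ∂(kpow Q k x)
                ≤ 1 + ((1-lam) ^ k * ‖x‖ ^ 2 + c/lam) := by linarith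
            exact mul_le_mul_of_nonneg_left h1 hε
        _ = ε * (1 + (1-lam) ^ k * ‖x‖ ^ 2 + c/lam) := by ring
    calc |(∫ u, f u ∂(kpow Q n x)) - ∫ u, f u ∂(kpow R n x)|
        = |∑ k ∈ Finset.range n, (T (k+1) - T k)| := by
          rw [Finset.sum_range_sub T n, hTn, hT0]
      _ ≤ ∑ k ∈ Finset.range n, |T (k+1) - T k| := Finset.abs_sum_le_sum_abs _ _
      _ ≤ ∑ k ∈ Finset.range n, ε * (1 + (1-lam) ^ k * ‖x‖ ^ 2 + c/lam) :=
          Finset.sum_le_sum fun k hk => key k (Finset.mem_range.mp hk)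
      _ = ε * ∑ k ∈ Finset.range n, (1 + (1-lam) ^ k * ‖x‖ ^ 2 + c/lam) :=
          (Finset.mul_sum _ _ _).symm
  · -- arithmetic bound
    have hgeom : ∑ k ∈ Finset.range n, (1-lam) ^ k ≤ 1/lam := by
      rw [geom_sum_eq (by intro h; rw [sub_eq_iff_eq_add] at h; linarith)]
      have hpow : 0 ≤ (1-lam) ^ n := pow_nonneg (by linarith) n
      have hrw : ((1-lam) ^ n - 1) / (1 - lam - 1) = (1 - (1-lam) ^ n) / lam := by
        rw [show (1:ℝ) - lam - 1 = -lam by ring, div_neg_eq_neg_div, neg_div', neg_sub]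
      rw [hrw]
      exact (div_le_div_iff_of_pos_right hlam0).mpr (by linarith)
    have hsum : ∑ k ∈ Finset.range n, (1 + (1-lam) ^ k * ‖x‖ ^ 2 + c/lam)
        = (n:ℝ) * (1 + c/lam) + (∑ k ∈ Finset.range n, (1-lam) ^ k) * ‖x‖ ^ 2 := by
      rw [Finset.sum_add_distrib, Finset.sum_add_distrib, Finset.sum_const,
        ← Finset.sum_mul, Finset.sum_const, Finset.card_range]
      push_cast; ring
    set S := ∑ k ∈ Finset.range n, (1-lam) ^ k with hS
    have hmul : ε * ‖x‖ ^ 2 * S ≤ ε * ‖x‖ ^ 2 * (1/lam) :=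
      mul_le_mul_of_nonneg_left hgeom (mul_nonneg hε hX)
    have h3 : ε * ‖x‖ ^ 2 * (1/lam) = ε * ‖x‖ ^ 2 / lam := by ring
    have h4 : ε * ((n:ℝ) * (1 + c/lam) + S * ‖x‖ ^ 2)
        = ε * n * (1 + c/lam) + ε * ‖x‖ ^ 2 * S := by ring
    rw [hsum]
    linarith
end
end

section
/- For the RWM acceptance log-ratio τ_γ(x,z) = U(x + √(2γ)z) - U(x) with ∇U L-Lipschitz, define ζ_γ(x,z) = 1 - min(1, e^{-τ_γ(x,z)}) - (√(2γ)⟨∇U(x), z⟩)₊. Then for all γ > 0 and x, z ∈ ℝ^d: |ζ_γ(x,z)| ≤ γ‖z‖² (L + 2‖∇U(x)‖² + 4γL²‖z‖²). -/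
open MeasureTheory Real
open scoped BigOperators RealInnerProductSpace

noncomputable section

/-!
Write `min 1 e^{-τ} = e^{-τ₊}`. The descent lemma for the `L`-Lipschitz gradient gives
`|τ - s| ≤ Lγ‖z‖²` for the first-order term `s = √(2γ)⟨∇U(x), z⟩`, hence `|τ₊ - s₊| ≤ Lγ‖z‖²`.
Then `t - t²/2 ≤ 1 - e^{-t} ≤ t` for `t = τ₊ ≥ 0` bounds the error by `Lγ‖z‖²` from above and by
`Lγ‖z‖² + τ₊²/2 ≤ Lγ‖z‖² + s₊² + (Lγ‖z‖²)²` from below, and `s₊² ≤ 2γ‖∇U(x)‖²‖z‖²`.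
-/

section Descent

variable {E : Type*} [NormedAddCommGroup E] [InnerProductSpace ℝ E] [CompleteSpace E]

theorem Differentiable.hasDerivAt_comp_add_smul {U : E → ℝ} (hdiff : Differentiable ℝ U)
    (x v : E) (t : ℝ) :
    HasDerivAt (fun t : ℝ => U (x + t • v)) ⟪gradient U (x + t • v), v⟫ t := by
  have hline : HasDerivAt (fun t : ℝ => x + t • v) v t := by
    simpa using ((hasDerivAt_id t).smul_const v).const_add x
  exact (hdiff (x + t • v)).hasFDerivAt.comp_hasDerivAt t hline |>.congr_deriv
    (by simp [gradient])

theorem abs_sub_sub_inner_le_of_lipschitz_gradient {U : E → ℝ} {L : ℝ}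
    (hdiff : Differentiable ℝ U)
    (hLip : ∀ x y, ‖gradient U x - gradient U y‖ ≤ L * ‖x - y‖) (x v : E) :
    |U (x + v) - U x - ⟪gradient U x, v⟫| ≤ L / 2 * ‖v‖ ^ 2 := by
  set f : ℝ → ℝ := fun t => U (x + t • v) - U x - t * ⟪gradient U x, v⟫
  have hf : ∀ t, HasDerivAt f ⟪gradient U (x + t • v) - gradient U x, v⟫ t := fun t => by
    rw [inner_sub_left]
    exact ((hdiff.hasDerivAt_comp_add_smul x v t).sub_const _).sub
      ((hasDerivAt_id t).mul_const _) |>.congr_deriv (by simp)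
  have hB : ∀ t, HasDerivAt (fun t => L / 2 * ‖v‖ ^ 2 * t ^ 2) (L * ‖v‖ ^ 2 * t) t := fun t =>
    ((hasDerivAt_pow 2 t).const_mul _).congr_deriv (by ring)
  have bound : ∀ t ∈ Set.Ico (0 : ℝ) 1,
      ‖⟪gradient U (x + t • v) - gradient U x, v⟫‖ ≤ L * ‖v‖ ^ 2 * t := fun t ht =>
    calc ‖⟪gradient U (x + t • v) - gradient U x, v⟫‖
        ≤ ‖gradient U (x + t • v) - gradient U x‖ * ‖v‖ := norm_inner_le_norm _ _
      _ ≤ L * ‖(x + t • v) - x‖ * ‖v‖ := by gcongr; exact hLip _ _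
      _ = L * ‖v‖ ^ 2 * t := by
        rw [add_sub_cancel_left, norm_smul, Real.norm_of_nonneg ht.1]; ring
  have := image_norm_le_of_norm_deriv_right_le_deriv_boundary
    (fun t _ => (hf t).continuousAt.continuousWithinAt) (fun t _ => (hf t).hasDerivWithinAt)
    (by simp [f]) hB bound (Set.right_mem_Icc.2 zero_le_one)
  simpa [f] using this

end Descent

theorem Real.exp_neg_le_one_sub_add_sq_div_two {a : ℝ} (ha : 0 ≤ a) :
    Real.exp (-a) ≤ 1 - a + a ^ 2 / 2 := by
  have hpos : 0 < 1 + a + a ^ 2 / 2 := by positivity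
  -- `(1 - a + a²/2)(1 + a + a²/2) = 1 + a⁴/4`
  calc Real.exp (-a) = (Real.exp a)⁻¹ := Real.exp_neg a
    _ ≤ (1 + a + a ^ 2 / 2)⁻¹ := inv_anti₀ hpos (Real.quadratic_le_exp_of_nonneg ha)
    _ ≤ 1 - a + a ^ 2 / 2 := by
      rw [inv_le_iff_one_le_mul₀ hpos]; nlinarith [pow_nonneg ha 4]

theorem Real.min_one_exp_neg (t : ℝ) : min 1 (Real.exp (-t)) = Real.exp (-max t 0) := by
  rw [← Real.exp_zero, ← Real.exp_monotone.map_min, min_comm, ← min_neg_neg, neg_zero]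

theorem abs_one_sub_min_one_exp_neg_sub_max_le {τ s K : ℝ} (h : |τ - s| ≤ K) :
    |1 - min 1 (Real.exp (-τ)) - max s 0| ≤ K + max s 0 ^ 2 + K ^ 2 := by
  rw [Real.min_one_exp_neg]
  set a := max τ 0
  set b := max s 0
  have ha : 0 ≤ a := le_max_right _ _
  have hab : |a - b| ≤ K := (abs_max_sub_max_le_abs τ s 0).trans h
  have hup : 1 - Real.exp (-a) ≤ a := by linarith [Real.add_one_le_exp (-a)]
  have hlow : a - a ^ 2 / 2 ≤ 1 - Real.exp (-a) := by
    linarith [Real.exp_neg_le_one_sub_add_sq_div_two ha]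
  obtain ⟨hab₁, hab₂⟩ := abs_le.1 hab
  rw [abs_le]
  constructor <;> nlinarith [sq_nonneg (b - K)]

theorem stmt_12_general {d : ℕ} (U : Euc d → ℝ) (L : ℝ)
    (hdiff : Differentiable ℝ U)
    (hLip : ∀ x y, ‖gradient U x - gradient U y‖ ≤ L * ‖x - y‖)
    (γ : ℝ) (hγ : 0 < γ) (x z : Euc d) :
    |1 - min 1 (Real.exp (-(U (x + Real.sqrt (2*γ) • z) - U x)))
       - max (Real.sqrt (2*γ) * ⟪gradient U x, z⟫) 0|
      ≤ γ * ‖z‖ ^ 2 * (L + 2 * ‖gradient U x‖ ^ 2 + 4 * γ * L ^ 2 * ‖z‖ ^ 2) := by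
  set g := gradient U x
  set s := Real.sqrt (2*γ) * ⟪g, z⟫
  have hsq : Real.sqrt (2*γ) ^ 2 = 2*γ := Real.sq_sqrt (by positivity)
  have htaylor : |(U (x + Real.sqrt (2*γ) • z) - U x) - s| ≤ L * γ * ‖z‖ ^ 2 := by
    have := abs_sub_sub_inner_le_of_lipschitz_gradient hdiff hLip x (Real.sqrt (2*γ) • z)
    rw [real_inner_smul_right] at this
    refine this.trans_eq ?_
    rw [norm_smul, mul_pow, Real.norm_eq_abs, sq_abs, hsq]
    ring
  have hs : max s 0 ^ 2 ≤ 2 * γ * ‖g‖ ^ 2 * ‖z‖ ^ 2 := by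
    have hinner : ⟪g, z⟫ ^ 2 ≤ (‖g‖ * ‖z‖) ^ 2 := by
      rw [← sq_abs]; gcongr; exact abs_real_inner_le_norm g z
    calc max s 0 ^ 2 ≤ s ^ 2 := by rcases le_total s 0 with h | h <;> simp [h, sq_nonneg]
      _ = 2 * γ * ⟪g, z⟫ ^ 2 := by rw [mul_pow, hsq]
      _ ≤ 2 * γ * ‖g‖ ^ 2 * ‖z‖ ^ 2 := by nlinarith
  calc _ ≤ L * γ * ‖z‖ ^ 2 + max s 0 ^ 2 + (L * γ * ‖z‖ ^ 2) ^ 2 :=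
        abs_one_sub_min_one_exp_neg_sub_max_le htaylor
    _ ≤ γ * ‖z‖ ^ 2 * (L + 2 * ‖g‖ ^ 2 + 4 * γ * L ^ 2 * ‖z‖ ^ 2) := by
      nlinarith [sq_nonneg (L * γ * ‖z‖ ^ 2)]

theorem stmt_12 {d : ℕ} (U : Euc d → ℝ) (L : ℝ) (hL : 0 ≤ L)
    (hdiff : Differentiable ℝ U)
    (hLip : ∀ x y, ‖gradient U x - gradient U y‖ ≤ L * ‖x - y‖)
    (γ : ℝ) (hγ : 0 < γ) (x z : Euc d) :
    |1 - min 1 (Real.exp (-(U (x + Real.sqrt (2*γ) • z) - U x)))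
       - max (Real.sqrt (2*γ) * ⟪gradient U x, z⟫) 0|
      ≤ γ * ‖z‖ ^ 2 * (L + 2 * ‖gradient U x‖ ^ 2 + 4 * γ * L ^ 2 * ‖z‖ ^ 2) :=
  stmt_12_general U L hdiff hLip γ hγ x z
end
end

section
/- Assume ‖D³U(x)‖ ≤ χ‖D²U(x)‖ (Frobenius-compatible norms) for all ‖x‖ ≥ K̃. Then for x with ‖x‖ ≥ K̃, γ > 0 small enough that the segment stays outside B(0, K̃), K > 0, and z with ‖z‖ ≤ K: ‖D²U(x + √(2γ)z)‖ ≤ ‖D²U(x)‖ (1 + (CχK)^{1/2} γ^{1/4} e^{Cχ√γ K/2}) for an absolute constant C (from norm equivalence), via a Grönwall argument on t ↦ ‖D²U(x + t√(2γ)z) - D²U(x)‖²_F. -/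
open MeasureTheory Real
open scoped BigOperators RealInnerProductSpace

noncomputable section

/-! Along the segment `t ↦ x + t • v`, `v = √(2γ) • z`, the hypothesis `‖D³U‖ ≤ χ ‖D²U‖` becomes
the differential inequality `‖g'‖ ≤ χ‖v‖ (‖g‖ + ‖D²U(x)‖)` for `g(t) = D²U(x + t • v) - D²U(x)`,
so Grönwall yields `‖g(1)‖ ≤ ‖D²U(x)‖ (e^{χ‖v‖} - 1)`. Since `e^a - 1 ≤ √(2a) e^a`, this is the
claim with `C = 2√2`: the `√2` of `√(2γ)` and the `2` of `√(2a)`. Working with the operator norm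
throughout, no norm-equivalence constant enters. -/

open Set

theorem gronwallBound_zero_mul (K ε x : ℝ) :
    gronwallBound 0 K (K * ε) x = ε * (exp (K * x) - 1) := by
  rcases eq_or_ne K 0 with rfl | hK
  · simp [gronwallBound_K0]
  · rw [gronwallBound_of_K_ne_0 hK, mul_div_cancel_left₀ ε hK]
    ring

section Segment

variable {E F : Type*} [NormedAddCommGroup E] [NormedSpace ℝ E]
  [NormedAddCommGroup F] [NormedSpace ℝ F]

theorem norm_sub_le_mul_exp_sub_one_of_norm_fderiv_le {f : E → F} {χ : ℝ} {x v : E}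
    (hf : Differentiable ℝ f) (hχ : 0 ≤ χ)
    (hbound : ∀ t ∈ Icc (0 : ℝ) 1, ‖fderiv ℝ f (x + t • v)‖ ≤ χ * ‖f (x + t • v)‖) :
    ‖f (x + v) - f x‖ ≤ ‖f x‖ * (exp (χ * ‖v‖) - 1) := by
  set g : ℝ → F := fun t => f (x + t • v) - f x
  have hline : ∀ t : ℝ, HasDerivAt (fun s : ℝ => x + s • v) v t := fun t => by
    simpa using ((hasDerivAt_id t).smul_const v).const_add x
  have hg : ∀ t, HasDerivAt g (fderiv ℝ f (x + t • v) v) t := fun t =>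
    ((hf _).hasFDerivAt.comp_hasDerivAt t (hline t)).sub_const (f x)
  have hg' : ∀ t ∈ Ico (0 : ℝ) 1,
      ‖fderiv ℝ f (x + t • v) v‖ ≤ χ * ‖v‖ * ‖g t‖ + χ * ‖v‖ * ‖f x‖ := fun t ht =>
    calc ‖fderiv ℝ f (x + t • v) v‖ ≤ ‖fderiv ℝ f (x + t • v)‖ * ‖v‖ :=
          ContinuousLinearMap.le_opNorm _ _
      _ ≤ χ * ‖f (x + t • v)‖ * ‖v‖ := by gcongr; exact hbound t (Ico_subset_Icc_self ht)
      _ ≤ χ * (‖g t‖ + ‖f x‖) * ‖v‖ := by gcongr; exact norm_le_norm_sub_add _ _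
      _ = χ * ‖v‖ * ‖g t‖ + χ * ‖v‖ * ‖f x‖ := by ring
  have hgron := norm_le_gronwallBound_of_norm_deriv_right_le (δ := 0)
    (fun t _ => (hg t).continuousAt.continuousWithinAt) (fun t _ => (hg t).hasDerivWithinAt)
    (by simp [g]) hg' 1 (right_mem_Icc.2 zero_le_one)
  simpa [g, gronwallBound_zero_mul] using hgron

end Segment

theorem Real.exp_sub_one_le_sqrt_mul_exp {a : ℝ} (ha : 0 ≤ a) :
    exp a - 1 ≤ √(2 * a) * exp a := by
  have hsq : (exp a - 1) ^ 2 ≤ 2 * a * exp a ^ 2 := by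
    have h1 : 1 ≤ exp a := one_le_exp ha
    have h2 : 1 - 2 * a ≤ exp (-(2 * a)) := one_sub_le_exp_neg _
    have h3 : exp a ^ 2 * exp (-(2 * a)) = 1 := by
      rw [← exp_nat_mul, ← exp_add]; norm_num
    nlinarith
  calc exp a - 1 ≤ √(2 * a * exp a ^ 2) :=
        (le_sqrt (by linarith [one_le_exp ha]) (by positivity)).2 hsq
    _ = √(2 * a) * exp a := by rw [sqrt_mul (by positivity), sqrt_sq (exp_pos a).le]

theorem Real.sqrt_sqrt_eq_rpow {γ : ℝ} (hγ : 0 ≤ γ) : √√γ = γ ^ ((1 : ℝ) / 4) := by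
  rw [sqrt_eq_rpow √γ, sqrt_eq_rpow γ, ← rpow_mul hγ]
  norm_num

theorem stmt_17 (d : ℕ) :
    ∃ C : ℝ, 0 < C ∧ ∀ U : Euc d → ℝ, ContDiff ℝ 3 U →
      ∀ χ Ktil : ℝ, 0 ≤ χ → 0 ≤ Ktil →
      (∀ x : Euc d, Ktil ≤ ‖x‖ →
        ‖iteratedFDeriv ℝ 3 U x‖ ≤ χ * ‖iteratedFDeriv ℝ 2 U x‖) →
      ∀ γ K : ℝ, 0 < γ → 0 < K →
      ∀ x : Euc d, Ktil ≤ ‖x‖ →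
      (∀ t ∈ Set.Icc (0:ℝ) 1, ∀ z : Euc d, ‖z‖ ≤ K →
        Ktil ≤ ‖x + (t * Real.sqrt (2*γ)) • z‖) →
      ∀ z : Euc d, ‖z‖ ≤ K →
        ‖iteratedFDeriv ℝ 2 U (x + Real.sqrt (2*γ) • z)‖
          ≤ ‖iteratedFDeriv ℝ 2 U x‖
            * (1 + Real.sqrt (C*χ*K) * γ ^ ((1:ℝ)/4)
                  * Real.exp (C * χ * Real.sqrt γ * K / 2)) := by
  refine ⟨2 * √2, by positivity, ?_⟩
  intro U hU χ Ktil hχ _ hgrowth γ K hγ _ x _ hseg z hz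
  set F := iteratedFDeriv ℝ 2 U
  set b := χ * (√(2 * γ) * K) with hb_def
  have hdiff : ‖F (x + √(2 * γ) • z) - F x‖ ≤ ‖F x‖ * (exp (χ * ‖√(2 * γ) • z‖) - 1) :=
    norm_sub_le_mul_exp_sub_one_of_norm_fderiv_le
      ((hU.iteratedFDeriv_right (by norm_num)).differentiable one_ne_zero) hχ fun t ht => by
        rw [norm_fderiv_iteratedFDeriv, smul_smul]
        exact hgrowth _ (hseg t ht z hz)
  have hexp : exp (χ * ‖√(2 * γ) • z‖) - 1 ≤ √(2 * b) * exp b :=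
    calc exp (χ * ‖√(2 * γ) • z‖) - 1 ≤ exp b - 1 := by
          rw [norm_smul, norm_of_nonneg (sqrt_nonneg _), hb_def]
          gcongr
      _ ≤ √(2 * b) * exp b := exp_sub_one_le_sqrt_mul_exp (by positivity)
  have hb : 2 * b = 2 * √2 * χ * K * √γ := by
    rw [hb_def, sqrt_mul zero_le_two]
    ring
  calc ‖F (x + √(2 * γ) • z)‖ ≤ ‖F x‖ + ‖F (x + √(2 * γ) • z) - F x‖ := norm_le_insert' _ _
    _ ≤ ‖F x‖ * (1 + √(2 * b) * exp b) := by
        linarith [mul_le_mul_of_nonneg_left hexp (norm_nonneg (F x))]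
    _ = ‖F x‖ * (1 + √(2 * √2 * χ * K) * γ ^ ((1 : ℝ) / 4)
          * exp (2 * √2 * χ * √γ * K / 2)) := by
      rw [hb, sqrt_mul (by positivity), sqrt_sqrt_eq_rpow hγ.le]
      congr 4
      linarith
end
end
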